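/- arXiv:1202.1788 — 3 statements merged into one kernel-verified Lean document; each statement's English description precedes it below -/
import Mathlib

section
/- Let (X, B, μ) be a standard probability space and T an invertible nonsingular transformation of (X, B, μ) which is zero type. If the Hellinger integrals are summable, i.e. ∑_{n=1}^∞ ∫_X √(d(μ∘Tⁿ)/dμ) dμ < ∞, then T is dissipative, i.e. ∑_{n=1}^∞ (d(μ∘Tⁿ)/dμ)(x) < ∞ for μ-a.e. x ∈ X. -/
open MeasureTheory Filter Topology
open scoped ENNReal

noncomputable section

/-- The Koopman operator `U_T f = √(T^{1'}) · (f ∘ T)` of a nonsingular invertible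
transformation `T` with inverse `Tinv`, where `T^{1'} = d(μ∘T)/dμ` and
`(μ∘T)(A) := μ(T A) = (μ.map Tinv) A`. -/
def koopman {X : Type*} [MeasurableSpace X] (μ : Measure X) (T Tinv : X → X)
    (f : X → ℂ) : X → ℂ :=
  fun x => (Real.sqrt (((μ.map Tinv).rnDeriv μ x).toReal) : ℂ) * f (T x)

/-- Let `(X, B, μ)` be a standard probability space and `T` an invertible
nonsingular transformation of it which is zero type (the correlations of the Koopman
operator `U_T` tend to `0` for all `f, g ∈ L²(μ)`).  If the Hellinger integrals are
summable, `∑_{n≥1} ∫ √(d(μ∘Tⁿ)/dμ) dμ < ∞`, then `T` is dissipative: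
`∑_{n≥1} (d(μ∘Tⁿ)/dμ)(x) < ∞` for `μ`-a.e. `x`.
Here `(μ∘Tⁿ)(A) := μ(Tⁿ A) = (μ.map (Tinv^[n])) A`. -/
theorem dissipative_of_zero_type_of_summable_hellinger
    {X : Type*} [MeasurableSpace X] [StandardBorelSpace X]
    (μ : Measure X) [IsProbabilityMeasure μ]
    (T Tinv : X → X) (hT : Measurable T) (hTinv : Measurable Tinv)
    (hlinv : Function.LeftInverse Tinv T) (hrinv : Function.RightInverse Tinv T)
    (hns : ∀ n : ℕ, μ.map (Tinv^[n]) ≪ μ ∧ μ ≪ μ.map (Tinv^[n]))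
    (hzero : ∀ f g : X → ℂ, MemLp f 2 μ → MemLp g 2 μ →
      Tendsto (fun n : ℕ =>
          ∫ x, ((koopman μ T Tinv)^[n] f) x * (starRingEnd ℂ) (g x) ∂μ)
        atTop (nhds 0))
    (hsum : Summable fun n : ℕ =>
      ∫ x, Real.sqrt (((μ.map (Tinv^[n + 1])).rnDeriv μ x).toReal) ∂μ) :
    ∀ᵐ x ∂μ, ∑' n : ℕ, (μ.map (Tinv^[n + 1])).rnDeriv μ x ≠ ⊤ := by
  set ν : ℕ → Measure X := fun n => μ.map (Tinv^[n + 1]) with hν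
  have hTn : ∀ n : ℕ, Measurable (Tinv^[n + 1]) := fun n => hTinv.iterate _
  have hfin : ∀ n, IsFiniteMeasure (ν n) := fun n => by
    rw [hν]; infer_instance
  set f : ℕ → X → ℝ≥0∞ := fun n x => (ν n).rnDeriv μ x with hf
  set s : ℕ → X → ℝ := fun n x => Real.sqrt ((f n x).toReal) with hs
  -- measurability
  have hmeas_f : ∀ n, Measurable (f n) := fun n => Measure.measurable_rnDeriv _ _
  have hmeas_s : ∀ n, Measurable (s n) := fun n =>
    ((hmeas_f n).ennreal_toReal).sqrt
  -- integrability of s n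
  have hint_s : ∀ n, Integrable (s n) μ := by
    intro n
    have := hfin n
    refine Integrable.mono' ((integrable_const (1 : ℝ)).add
      (Measure.integrable_toReal_rnDeriv (μ := ν n) (ν := μ))) (hmeas_s n).aestronglyMeasurable ?_
    filter_upwards with x
    have h0 : (0:ℝ) ≤ (f n x).toReal := ENNReal.toReal_nonneg
    rw [Real.norm_eq_abs, abs_of_nonneg (Real.sqrt_nonneg _)]
    calc Real.sqrt ((f n x).toReal) ≤ max 1 ((f n x).toReal) := by
          rcases le_total ((f n x).toReal) 1 with h | h
          · exact le_max_of_le_left (Real.sqrt_le_one.mpr h)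
          · exact le_max_of_le_right
              (by nlinarith [Real.sq_sqrt h0, Real.sqrt_nonneg ((f n x).toReal)])
      _ ≤ 1 + (f n x).toReal := max_le (by linarith) (by linarith)
  -- the ENNReal-valued sqrt functions
  set a : ℕ → X → ℝ≥0∞ := fun n x => ENNReal.ofReal (s n x) with ha
  have hsum_lint : ∑' n, ∫⁻ x, a n x ∂μ ≠ ⊤ := by
    have h1 : ∀ n, ∫⁻ x, a n x ∂μ = ENNReal.ofReal (∫ x, s n x ∂μ) := fun n =>
      (ofReal_integral_eq_lintegral_ofReal (hint_s n)
        (Filter.Eventually.of_forall fun x => Real.sqrt_nonneg _)).symm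
    calc ∑' n, ∫⁻ x, a n x ∂μ = ∑' n, ENNReal.ofReal (∫ x, s n x ∂μ) := by
          simp_rw [h1]
      _ = ENNReal.ofReal (∑' n, ∫ x, s n x ∂μ) :=
          (ENNReal.ofReal_tsum_of_nonneg (fun n =>
            integral_nonneg fun x => Real.sqrt_nonneg _) hsum).symm
      _ ≠ ⊤ := ENNReal.ofReal_ne_top
  have hlint : ∫⁻ x, ∑' n, a n x ∂μ ≠ ⊤ := by
    rw [lintegral_tsum fun n => ((hmeas_s n).ennreal_ofReal).aemeasurable]
    exact hsum_lint
  have hae_a : ∀ᵐ x ∂μ, ∑' n, a n x ≠ ⊤ := by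
    filter_upwards [ae_lt_top (by measurability) hlint] with x hx using hx.ne
  have hae_fin : ∀ᵐ x ∂μ, ∀ n, f n x < ⊤ := by
    rw [ae_all_iff]
    intro n
    have := hfin n
    exact Measure.rnDeriv_lt_top (ν n) μ
  filter_upwards [hae_a, hae_fin] with x hxa hxf
  -- pointwise: f n x = (a n x)^2 and eventually a n x ≤ 1
  have hfa : ∀ n, f n x = a n x ^ 2 := by
    intro n
    have h0 : (0:ℝ) ≤ (f n x).toReal := ENNReal.toReal_nonneg
    rw [ha, hs]
    simp only [← ENNReal.ofReal_pow (Real.sqrt_nonneg _), Real.sq_sqrt h0,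
      ENNReal.ofReal_toReal (hxf n).ne]
  have htend : Tendsto (fun n => a n x) atTop (nhds 0) :=
    ENNReal.tendsto_atTop_zero_of_tsum_ne_top hxa
  obtain ⟨N, hN⟩ := (htend.eventually_lt_const (by norm_num : (0:ℝ≥0∞) < 1)).exists_forall_of_atTop
  -- bound the tsum
  have hbound : ∑' n, f n x ≤ ∑ i ∈ Finset.range N, f i x + ∑' n, a n x := by
    rw [ENNReal.tsum_eq_iSup_sum]
    refine iSup_le fun t => ?_
    classical
    calc ∑ i ∈ t, f i x
        = ∑ i ∈ t.filter (· < N), f i x + ∑ i ∈ t.filter (¬ · < N), f i x := by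
          rw [Finset.sum_filter_add_sum_filter_not]
      _ ≤ ∑ i ∈ Finset.range N, f i x + ∑' n, a n x := by
          refine add_le_add ?_ ?_
          · refine Finset.sum_le_sum_of_subset ?_
            intro i hi
            rw [Finset.mem_filter] at hi
            exact Finset.mem_range.mpr hi.2
          · calc ∑ i ∈ t.filter (¬ · < N), f i x ≤ ∑ i ∈ t.filter (¬ · < N), a i x := by
                  refine Finset.sum_le_sum fun i hi => ?_
                  simp only [Finset.mem_filter, not_lt] at hi
                  rw [hfa i, sq]
                  calc a i x * a i x ≤ 1 * a i x :=
                        mul_le_mul_left (hN i hi.2).le _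
                    _ = a i x := one_mul _
              _ ≤ ∑' n, a n x := ENNReal.sum_le_tsum _
  refine ne_top_of_le_ne_top ?_ hbound
  exact ENNReal.add_ne_top.mpr ⟨(ENNReal.sum_lt_top.mpr fun i _ => hxf i).ne, hxa⟩


end
end

section
/- Let P be a half-stationary product measure on X = {0,1}^ℤ. The shift T is nonsingular with respect to P if and only if 0 < P_n(0) < 1 for all n ≥ 1 and ∑_{k=0}^∞ [ (√(P_k(0)) − √(P_{k+1}(0)))² + (√(P_k(1)) − √(P_{k+1}(1)))² ] < ∞. -/
open MeasureTheory Filter Topology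
open scoped ENNReal

noncomputable section

namespace NSB

/-- The two-sided shift by `n` on `X = {0,1}^ℤ` (with `Bool`: `false` = 0, `true` = 1):
`(shift n x) k = x (k + n)`.  The shift `T` of the paper is `shift 1`. -/
def shift (n : ℤ) (x : ℤ → Bool) : ℤ → Bool := fun k => x (k + n)

/-- `P` is the product probability measure `∏_{k ∈ ℤ} P_k` on `{0,1}^ℤ` with marginals `p`,
where `p k b` is the probability that coordinate `k` equals `b`. -/
def IsProductMeasure (P : Measure (ℤ → Bool)) (p : ℤ → Bool → ℝ) : Prop :=
  IsProbabilityMeasure P ∧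
  (∀ k b, 0 ≤ p k b) ∧ (∀ k, p k false + p k true = 1) ∧
  ∀ (s : Finset ℤ) (y : ℤ → Bool),
    P {x | ∀ i ∈ s, x i = y i} = ∏ i ∈ s, ENNReal.ofReal (p i (y i))

/-- Half-stationarity (with `p = 1/2`): `P_k(0) = P_k(1) = 1/2` for all `k ≤ 0`. -/
def HalfStationary (p : ℤ → Bool → ℝ) : Prop :=
  ∀ k : ℤ, k ≤ 0 → p k false = 1 / 2

/-- The shift is nonsingular with respect to `P` : `P` and the pushforward of `P`
under the shift are mutually absolutely continuous. -/
def Nonsingular (P : Measure (ℤ → Bool)) : Prop :=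
  P ≪ P.map (shift 1) ∧ P.map (shift 1) ≪ P

/-- `rnd P n = T^{n'} = d(P∘Tⁿ)/dP`, where `(P∘Tⁿ)(A) := P(Tⁿ A) = (P.map (shift (-n))) A`
(the shift is invertible with inverse `shift (-1)`). -/
def rnd (P : Measure (ℤ → Bool)) (n : ℕ) : (ℤ → Bool) → ℝ≥0∞ :=
  (P.map (shift (-(n : ℤ)))).rnDeriv P

/-- Conservativity via Hopf's criterion: `∑_{n ≥ 1} T^{n'}(x) = ∞` for `P`-a.e. `x`. -/
def Conservative (P : Measure (ℤ → Bool)) : Prop :=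
  ∀ᵐ x ∂P, ∑' n : ℕ, rnd P (n + 1) x = ⊤

/-- Dissipativity: `∑_{n ≥ 1} T^{n'}(x) < ∞` for `P`-a.e. `x`. -/
def Dissipative (P : Measure (ℤ → Bool)) : Prop :=
  ∀ᵐ x ∂P, ∑' n : ℕ, rnd P (n + 1) x ≠ ⊤

/-- Ergodicity of the shift with respect to `P`. -/
def ErgodicShift (P : Measure (ℤ → Bool)) : Prop :=
  ∀ A : Set (ℤ → Bool), MeasurableSet A → shift 1 ⁻¹' A = A → P A = 0 ∨ P A = 1

/-- Existence of an absolutely continuous invariant probability: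
a probability `ν` with `ν∘T⁻¹ = ν` which is mutually absolutely continuous with `P`. -/
def HasACIP (P : Measure (ℤ → Bool)) : Prop :=
  ∃ ν : Measure (ℤ → Bool),
    IsProbabilityMeasure ν ∧ ν.map (shift 1) = ν ∧ ν ≪ P ∧ P ≪ ν

/-- The measure `m = e^s ds` on `ℝ`. -/
def expM : Measure ℝ := volume.withDensity fun s => ENNReal.ofReal (Real.exp s)

/-- The Maharam extension `T̃(x,s) = (Tx, s + log T^{1'}(x))` of the shift. -/
def maharam (P : Measure (ℤ → Bool)) : (ℤ → Bool) × ℝ → (ℤ → Bool) × ℝ :=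
  fun q => (shift 1 q.1, q.2 + Real.log ((rnd P 1 q.1).toReal))

/-- The inverse of the Maharam extension of the shift. -/
def maharamInv (P : Measure (ℤ → Bool)) : (ℤ → Bool) × ℝ → (ℤ → Bool) × ℝ :=
  fun q => (shift (-1) q.1, q.2 - Real.log ((rnd P 1 (shift (-1) q.1)).toReal))

/-- The Kakutani–Hellinger distance
`d(P, T_*ⁿP) = ∑_{i ∈ ℤ} [(√P_i(0) − √P_{i−n}(0))² + (√P_i(1) − √P_{i−n}(1))²]`. -/
def dHell (p : ℤ → Bool → ℝ) (n : ℕ) : ℝ :=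
  ∑' i : ℤ, ((Real.sqrt (p i false) - Real.sqrt (p (i - (n : ℤ)) false)) ^ 2 +
    (Real.sqrt (p i true) - Real.sqrt (p (i - (n : ℤ)) true)) ^ 2)

/-! ### The one-sided space `X⁺`

`X⁺ = {0,1}^{ℕ ≥ 1}` is realized as `ℕ → Bool`, where the index `i : ℕ` corresponds
to the coordinate `i + 1` of the paper (so the marginal of index `i` is `P_{i+1}`). -/

/-- `Q` is the product probability measure on `{0,1}^ℕ` with marginals `q`. -/
def IsProductMeasureN (Q : Measure (ℕ → Bool)) (q : ℕ → Bool → ℝ) : Prop :=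
  IsProbabilityMeasure Q ∧
  (∀ k b, 0 ≤ q k b) ∧ (∀ k, q k false + q k true = 1) ∧
  ∀ (s : Finset ℕ) (y : ℕ → Bool),
    Q {x | ∀ i ∈ s, x i = y i} = ∏ i ∈ s, ENNReal.ofReal (q i (y i))

/-- The binary odometer (adding machine) `τ`: the first `false` coordinate is turned
into `true` and all (`true`) coordinates before it are turned into `false`;
on the (a.e. irrelevant) all-`true` sequence we let `τ` be the identity. -/
def odometer (x : ℕ → Bool) : ℕ → Bool :=
  haveI := Classical.propDecidable (∃ n, x n = false)
  if h : ∃ n, x n = false then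
    fun i => if i < Nat.find h then false else if i = Nat.find h then true else x i
  else x

/-- The inverse `τ⁻¹` of the binary odometer (defined analogously, a.e. inverse to `τ`). -/
def odometerInv (x : ℕ → Bool) : ℕ → Bool :=
  haveI := Classical.propDecidable (∃ n, x n = true)
  if h : ∃ n, x n = true then
    fun i => if i < Nat.find h then true else if i = Nat.find h then false else x i
  else x

/-- `rndOdo Q n = d(P⁺∘τⁿ)/dP⁺`, where `(P⁺∘τⁿ)(A) := P⁺(τⁿ A) = (Q.map (τ⁻¹ ^[n])) A`. -/
def rndOdo (Q : Measure (ℕ → Bool)) (n : ℕ) : (ℕ → Bool) → ℝ≥0∞ :=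
  (Q.map (odometerInv^[n])).rnDeriv Q

/-- The one-sided shift `σ` on `X⁺`. -/
def oneShift (y : ℕ → Bool) : ℕ → Bool := fun i => y (i + 1)

/-- The Radon–Nikodym derivative of the odometer,
`τ'(x) = (P_{φ(x)}(1)/P_{φ(x)}(0)) · ∏_{k=1}^{φ(x)−1} P_k(0)/P_k(1)`,
where `φ(x) = min {n ≥ 1 : x_n = 0}` (in our indexing, `φ(x) = Nat.find h + 1`). -/
def tauDeriv (p : ℤ → Bool → ℝ) (x : ℕ → Bool) : ℝ :=
  haveI := Classical.propDecidable (∃ n, x n = false)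
  if h : ∃ n, x n = false then
    (p ((Nat.find h : ℤ) + 1) true / p ((Nat.find h : ℤ) + 1) false) *
      ∏ i ∈ Finset.range (Nat.find h), (p ((i : ℤ) + 1) false / p ((i : ℤ) + 1) true)
  else 1

/-- The Maharam extension `τ̃(x,s) = (τx, s + log τ'(x))` of the odometer. -/
def maharamOdo (p : ℤ → Bool → ℝ) : (ℕ → Bool) × ℝ → (ℕ → Bool) × ℝ :=
  fun q => (odometer q.1, q.2 + Real.log (tauDeriv p q.1))

/-- The function `φ(x) := ∑_{k=1}^∞ log (P_{k−1}(x_k)/P_k(x_k))` (denoted `Phi` here),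
defined as the limit of the partial sums (junk value if the series diverges);
in our indexing the `k`-th term is `log (P_i(x_{i+1})/P_{i+1}(x_{i+1}))` with `i = k − 1`. -/
def Phi (p : ℤ → Bool → ℝ) (y : ℕ → Bool) : ℝ :=
  limUnder atTop fun M : ℕ =>
    ∑ i ∈ Finset.range M, Real.log (p (i : ℤ) (y i) / p ((i : ℤ) + 1) (y i))


/-! ### Auxiliary material for the proof -/

/-- cylinder set -/
def cyl (s : Finset ℤ) (y : ℤ → Bool) : Set (ℤ → Bool) := {x | ∀ i ∈ s, x i = y i}

lemma measurableSet_cyl (s : Finset ℤ) (y : ℤ → Bool) : MeasurableSet (cyl s y) := by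
  have : cyl s y = ⋂ i ∈ s, (fun x : ℤ → Bool => x i) ⁻¹' {y i} := by
    ext x; simp [cyl]
  rw [this]
  exact MeasurableSet.biInter s.countable_toSet fun i _ =>
    (measurable_pi_apply i) (by trivial)

def cylSets : Set (Set (ℤ → Bool)) := {A | ∃ s y, A = cyl s y}

lemma isPiSystem_cylSets : IsPiSystem cylSets := by
  rintro A ⟨s, y, rfl⟩ B ⟨t, z, rfl⟩ hne
  classical
  refine ⟨s ∪ t, fun k => if k ∈ s then y k else z k, ?_⟩
  obtain ⟨x0, hx0⟩ := hne
  have hyz : ∀ k, k ∈ s → k ∈ t → y k = z k := fun k hks hkt => by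
    rw [← hx0.1 k hks, ← hx0.2 k hkt]
  ext x
  simp only [Set.mem_inter_iff, cyl, Set.mem_setOf_eq, Finset.mem_union]
  constructor
  · rintro ⟨h1, h2⟩ k hk
    rcases Classical.em (k ∈ s) with hs | hs
    · simp [hs, h1 k hs]
    · rcases hk with hk | hk
      · exact absurd hk hs
      · simp [hs, h2 k hk]
  · intro h
    constructor
    · intro k hk; have := h k (Or.inl hk); simpa [hk] using this
    · intro k hk; have := h k (Or.inr hk)
      rcases Classical.em (k ∈ s) with hs | hs
      · simpa [hs, hyz k hs hk] using this
      · simpa [hs] using this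

lemma generateFrom_cylSets :
    (MeasurableSpace.pi : MeasurableSpace (ℤ → Bool)) = .generateFrom cylSets := by
  refine le_antisymm ?_ ?_
  · rw [MeasurableSpace.pi]
    refine iSup_le fun k => ?_
    rw [MeasurableSpace.comap_le_iff_le_map]
    intro u _
    show MeasurableSet[MeasurableSpace.generateFrom cylSets] ((fun x : ℤ → Bool => x k) ⁻¹' u)
    have hsingle : ∀ b : Bool,
        MeasurableSet[MeasurableSpace.generateFrom cylSets]
          ((fun x : ℤ → Bool => x k) ⁻¹' {b}) := by
      intro b
      refine MeasurableSpace.measurableSet_generateFrom ⟨{k}, fun _ => b, ?_⟩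
      ext x; simp [cyl]
    have : u = ⋃ b ∈ u, {b} := by simp
    rw [this, Set.preimage_iUnion₂]
    exact MeasurableSet.biUnion u.to_countable fun b _ => hsingle b
  · refine MeasurableSpace.generateFrom_le ?_
    rintro A ⟨s, y, rfl⟩
    exact measurableSet_cyl s y


/-- extension of a pattern on `w` by `false` elsewhere -/
def pext (w : Finset ℤ) (y : {k // k ∈ w} → Bool) : ℤ → Bool :=
  fun k => if h : k ∈ w then y ⟨k, h⟩ else false

lemma pext_mem (w : Finset ℤ) (y : {k // k ∈ w} → Bool) (k : ℤ) (h : k ∈ w) :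
    pext w y k = y ⟨k, h⟩ := dif_pos h

section Core
variable {μ : Measure (ℤ → Bool)} {u : ℤ → Bool → ℝ}

lemma repr_dep (w : Finset ℤ) (c : (ℤ → Bool) → ℝ)
    (hc : ∀ x x', (∀ k ∈ w, x k = x' k) → c x = c x') (x : ℤ → Bool) :
    c x = ∑ y : {k // k ∈ w} → Bool,
      (cyl w (pext w y)).indicator (fun _ => c (pext w y)) x := by
  classical
  have hx : x ∈ cyl w (pext w (fun k => x k.1)) := by
    intro i hi; rw [pext_mem w _ i hi]
  rw [Finset.sum_eq_single (fun k : {k // k ∈ w} => x k.1)]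
  · rw [Set.indicator_of_mem hx]
    exact hc _ _ fun k hk => ((pext_mem w (fun k => x k.1) k hk).symm : x k = _)
  · intro y _ hy
    rw [Set.indicator_of_notMem]
    intro hmem
    apply hy; funext k
    have := hmem k.1 k.2
    rw [pext_mem w y k.1 k.2] at this
    simp [← this]
  · intro h; exact absurd (Finset.mem_univ _) h

lemma integrable_dep (hμ : IsProductMeasure μ u) (w : Finset ℤ) (c : (ℤ → Bool) → ℝ)
    (hc : ∀ x x', (∀ k ∈ w, x k = x' k) → c x = c x') : Integrable c μ := by
  haveI := hμ.1
  have : c = fun x => ∑ y : {k // k ∈ w} → Bool,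
      (cyl w (pext w y)).indicator (fun _ => c (pext w y)) x := by
    funext x; exact repr_dep w c hc x
  rw [this]
  exact integrable_finset_sum _ fun y _ =>
    (integrable_const _).indicator (measurableSet_cyl _ _)

lemma integral_dep (hμ : IsProductMeasure μ u) (w : Finset ℤ) (c : (ℤ → Bool) → ℝ)
    (hc : ∀ x x', (∀ k ∈ w, x k = x' k) → c x = c x') :
    ∫ x, c x ∂μ = ∑ y : {k // k ∈ w} → Bool,
      c (pext w y) * ∏ k : {k // k ∈ w}, u k.1 (y k) := by
  haveI := hμ.1
  classical
  rw [show (fun x => c x) = fun x => ∑ y : {k // k ∈ w} → Bool,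
      (cyl w (pext w y)).indicator (fun _ => c (pext w y)) x from
    funext (repr_dep w c hc)]
  rw [integral_finset_sum _ fun y _ =>
    (integrable_const _).indicator (measurableSet_cyl _ _)]
  refine Finset.sum_congr rfl fun y _ => ?_
  rw [integral_indicator_const _ (measurableSet_cyl _ _)]
  have hcyl : μ (cyl w (pext w y)) = ∏ i ∈ w, ENNReal.ofReal (u i (pext w y i)) :=
    hμ.2.2.2 w (pext w y)
  rw [smul_eq_mul, mul_comm, measureReal_def, hcyl, ENNReal.toReal_prod]
  congr 1
  rw [← Finset.prod_coe_sort w (fun i => (ENNReal.ofReal (u i (pext w y i))).toReal)]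
  refine Finset.prod_congr rfl fun k _ => ?_
  rw [pext_mem w y k.1 k.2, ENNReal.toReal_ofReal (hμ.2.1 _ _)]

lemma integral_prod_eval (hμ : IsProductMeasure μ u) (w : Finset ℤ) (g : ℤ → Bool → ℝ) :
    ∫ x, ∏ k ∈ w, g k (x k) ∂μ
      = ∏ k ∈ w, (g k false * u k false + g k true * u k true) := by
  classical
  rw [integral_dep hμ w _ (fun x x' h => Finset.prod_congr rfl fun k hk => by rw [h k hk])]
  have : ∀ y : {k // k ∈ w} → Bool,
      (∏ k ∈ w, g k (pext w y k)) * ∏ k : {k // k ∈ w}, u k.1 (y k)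
        = ∏ k : {k // k ∈ w}, g k.1 (y k) * u k.1 (y k) := by
    intro y
    rw [← Finset.prod_coe_sort w (fun k => g k (pext w y k)), ← Finset.prod_mul_distrib]
    exact Finset.prod_congr rfl fun k _ => by rw [pext_mem w y k.1 k.2]
  have h2 := Finset.sum_prod_piFinset (Finset.univ : Finset Bool)
    (fun (k : {k // k ∈ w}) b => g k.1 b * u k.1 b)
  rw [Fintype.piFinset_univ] at h2
  rw [Finset.sum_congr rfl fun y _ => this y, h2]
  rw [← Finset.prod_coe_sort w (fun k => g k false * u k false + g k true * u k true)]
  exact Finset.prod_congr rfl fun k _ => by rw [Fintype.sum_bool]; ring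

end Core


section Kakutani
variable {u v : ℤ → Bool → ℝ}

def emb : ℕ ↪ ℤ := ⟨fun n => (n : ℤ), fun a b h => Int.natCast_inj.mp h⟩

lemma emb_apply (n : ℕ) : emb n = (n : ℤ) := rfl

def sn (n : ℕ) : Finset ℤ := (Finset.range n).map emb

lemma mem_sn {k : ℤ} {n : ℕ} : k ∈ sn n ↔ 0 ≤ k ∧ k < n := by
  simp only [sn, Finset.mem_map, Finset.mem_range, emb_apply, Function.Embedding.coeFn_mk]
  constructor
  · rintro ⟨a, ha, rfl⟩; omega
  · rintro ⟨h0, hn⟩; exact ⟨k.toNat, by omega, by omega⟩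

lemma sn_mono {m n : ℕ} (h : m ≤ n) : sn m ⊆ sn n := by
  intro k hk; rw [mem_sn] at *; omega

lemma sn_sdiff (m n : ℕ) : sn n \ sn m = (Finset.Ico m n).map emb := by
  ext k
  simp only [Finset.mem_sdiff, mem_sn, Finset.mem_map, Finset.mem_Ico, emb_apply,
    Function.Embedding.coeFn_mk]
  constructor
  · rintro ⟨⟨h0, hn⟩, h2⟩
    exact ⟨k.toNat, by omega, by omega⟩
  · rintro ⟨a, ⟨h1, h2⟩, rfl⟩; omega

variable (u v) in
def rr : ℤ → Bool → ℝ := fun k b => v k b / u k b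
variable (u v) in
def Dn (n : ℕ) (x : ℤ → Bool) : ℝ := ∏ k ∈ sn n, rr u v k (x k)
variable (u v) in
def En (n : ℕ) (x : ℤ → Bool) : ℝ :=
  ∏ k ∈ sn n, Real.sqrt (rr u v k (x k))
variable (u v) in
def rho : ℤ → ℝ :=
  fun k => Real.sqrt (u k false * v k false) + Real.sqrt (u k true * v k true)

lemma rr_pos (hu : ∀ k b, 0 < u k b) (hv : ∀ k b, 0 < v k b) : ∀ k b, 0 < rr u v k b := fun k b => div_pos (hv k b) (hu k b)

lemma Dn_nonneg (hu : ∀ k b, 0 < u k b) (hv : ∀ k b, 0 < v k b) (n : ℕ) (x : ℤ → Bool) : 0 ≤ Dn u v n x :=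
  Finset.prod_nonneg fun k _ => (rr_pos hu hv k _).le

lemma En_nonneg (n : ℕ) (x : ℤ → Bool) : 0 ≤ En u v n x :=
  Finset.prod_nonneg fun k _ => Real.sqrt_nonneg _

lemma En_sq (hu : ∀ k b, 0 < u k b) (hv : ∀ k b, 0 < v k b) (n : ℕ) (x : ℤ → Bool) : En u v n x ^ 2 = Dn u v n x := by
  rw [En, ← Finset.prod_pow]
  exact Finset.prod_congr rfl fun k _ => Real.sq_sqrt (rr_pos hu hv k _).le

lemma Dn_dep (n : ℕ) (x x' : ℤ → Bool) (h : ∀ k ∈ sn n, x k = x' k) :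
    Dn u v n x = Dn u v n x' :=
  Finset.prod_congr rfl fun k hk => by rw [h k hk]

lemma En_dep (n : ℕ) (x x' : ℤ → Bool) (h : ∀ k ∈ sn n, x k = x' k) :
    En u v n x = En u v n x' :=
  Finset.prod_congr rfl fun k hk => by rw [h k hk]

lemma measurable_Dn (n : ℕ) : Measurable (Dn u v n) :=
  Finset.measurable_prod _ fun k _ =>
    (measurable_of_countable (rr u v k)).comp (measurable_pi_apply k)

/-- key pointwise identity -/
lemma keyprod (hu : ∀ k b, 0 < u k b) (huv : ∀ k : ℤ, k < 0 → u k = v k) (n : ℕ) (W : Finset ℤ)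
    (hsub : sn n ⊆ W) (hW : ∀ k ∈ W, k < n) (e : ℤ → Bool) :
    Dn u v n e * ∏ k ∈ W, u k (e k) = ∏ k ∈ W, v k (e k) := by
  rw [← Finset.prod_sdiff hsub, ← Finset.prod_sdiff hsub (f := fun k => v k (e k))]
  have h1 : ∀ k ∈ W \ sn n, u k (e k) = v k (e k) := by
    intro k hk
    rcases Finset.mem_sdiff.1 hk with ⟨hkW, hkn⟩
    have : k < 0 := by
      rcases lt_or_ge k 0 with h | h
      · exact h
      · exact absurd (mem_sn.2 ⟨h, hW k hkW⟩) hkn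
    rw [huv k this]
  rw [Finset.prod_congr rfl h1]
  have h2 : Dn u v n e * ∏ k ∈ sn n, u k (e k) = ∏ k ∈ sn n, v k (e k) := by
    rw [Dn, ← Finset.prod_mul_distrib]
    exact Finset.prod_congr rfl fun k _ => div_mul_cancel₀ _ (hu k _).ne'
  ring_nf
  rw [mul_comm (Dn u v n e), mul_assoc, h2]

/-- Master lemma: change of variables for functions of finitely many coordinates. -/
lemma master (hu : ∀ k b, 0 < u k b) {μ ν : Measure (ℤ → Bool)} (hμ : IsProductMeasure μ u)
    (hν : IsProductMeasure ν v) (huv : ∀ k : ℤ, k < 0 → u k = v k)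
    (n : ℕ) (w : Finset ℤ) (hw : ∀ k ∈ w, k < n)
    (c : (ℤ → Bool) → ℝ) (hc : ∀ x x', (∀ k ∈ w, x k = x' k) → c x = c x') :
    ∫ x, c x * Dn u v n x ∂μ = ∫ x, c x ∂ν := by
  classical
  set W := w ∪ sn n with hWdef
  have hsub : sn n ⊆ W := Finset.subset_union_right
  have hwW : w ⊆ W := Finset.subset_union_left
  have hWlt : ∀ k ∈ W, k < n := by
    intro k hk
    rcases Finset.mem_union.1 hk with h | h
    · exact hw k h
    · exact (mem_sn.1 h).2
  have hcW : ∀ x x', (∀ k ∈ W, x k = x' k) → c x = c x' :=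
    fun x x' h => hc x x' fun k hk => h k (hwW hk)
  have hcD : ∀ x x', (∀ k ∈ W, x k = x' k) →
      c x * Dn u v n x = c x' * Dn u v n x' := by
    intro x x' h
    rw [hcW x x' h, Dn_dep n x x' fun k hk => h k (hsub hk)]
  rw [integral_dep hμ W _ hcD, integral_dep hν W c hcW]
  refine Finset.sum_congr rfl fun y _ => ?_
  set e : ℤ → Bool := pext W y with he
  have hco : ∀ (f : ℤ → Bool → ℝ), ∏ k : {k // k ∈ W}, f k.1 (y k) = ∏ k ∈ W, f k (e k) := by
    intro f
    rw [← Finset.prod_coe_sort W (fun k => f k (e k))]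
    exact Finset.prod_congr rfl fun k _ => by simp [he, pext, k.2]
  rw [hco u, hco v, mul_assoc, keyprod hu huv n W hsub hWlt e]



lemma sqrt_rr_mul (hu : ∀ k b, 0 < u k b) (hv : ∀ k b, 0 < v k b) (k : ℤ) (b : Bool) :
    Real.sqrt (rr u v k b) * u k b = Real.sqrt (u k b * v k b) := by
  rw [rr, Real.sqrt_div (hv k b).le, div_mul_eq_mul_div, mul_div_assoc,
    Real.div_sqrt, ← Real.sqrt_mul (hv k b).le, mul_comm (v k b)]

lemma rho_factor (hu : ∀ k b, 0 < u k b) (hv : ∀ k b, 0 < v k b) (k : ℤ) :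
    Real.sqrt (rr u v k false) * u k false + Real.sqrt (rr u v k true) * u k true
      = rho u v k := by
  rw [sqrt_rr_mul hu hv, sqrt_rr_mul hu hv, rho]

lemma int_Dn {μ : Measure (ℤ → Bool)} (hμ : IsProductMeasure μ u)
    (hν1 : ∀ k, v k false + v k true = 1) (hu : ∀ k b, 0 < u k b) (n : ℕ) :
    ∫ x, Dn u v n x ∂μ = 1 := by
  have h0 := integral_prod_eval hμ (sn n) (rr u v)
  rw [show ∫ x, Dn u v n x ∂μ = ∫ x, ∏ k ∈ sn n, rr u v k (x k) ∂μ from rfl, h0]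
  refine Finset.prod_eq_one fun k _ => ?_
  rw [rr, rr, div_mul_cancel₀ _ (hu k false).ne', div_mul_cancel₀ _ (hu k true).ne', hν1 k]

lemma int_En {μ : Measure (ℤ → Bool)} (hμ : IsProductMeasure μ u)
    (hu : ∀ k b, 0 < u k b) (hv : ∀ k b, 0 < v k b) (n : ℕ) :
    ∫ x, En u v n x ∂μ = ∏ k ∈ sn n, rho u v k := by
  have h0 := integral_prod_eval hμ (sn n) (fun k b => Real.sqrt (rr u v k b))
  rw [show ∫ x, En u v n x ∂μ
      = ∫ x, ∏ k ∈ sn n, (fun k b => Real.sqrt (rr u v k b)) k (x k) ∂μ from rfl, h0]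
  exact Finset.prod_congr rfl fun k _ => rho_factor hu hv k

lemma int_EnEm {μ : Measure (ℤ → Bool)} (hμ : IsProductMeasure μ u)
    (hν1 : ∀ k, v k false + v k true = 1) (hu : ∀ k b, 0 < u k b)
    (hv : ∀ k b, 0 < v k b) {m n : ℕ} (h : m ≤ n) :
    ∫ x, En u v n x * En u v m x ∂μ = ∏ k ∈ sn n \ sn m, rho u v k := by
  classical
  have hsub := sn_mono h
  have hptw : ∀ x, En u v n x * En u v m x
      = ∏ k ∈ sn n, (fun k b => if k ∈ sn m then rr u v k b
          else Real.sqrt (rr u v k b)) k (x k) := by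
    intro x
    rw [En, En, ← Finset.prod_sdiff hsub,
      ← Finset.prod_sdiff hsub (f := fun k => (fun k b => if k ∈ sn m then rr u v k b
          else Real.sqrt (rr u v k b)) k (x k))]
    have e1 : ∀ k ∈ sn n \ sn m,
        (if k ∈ sn m then rr u v k (x k) else Real.sqrt (rr u v k (x k)))
          = Real.sqrt (rr u v k (x k)) := fun k hk =>
      if_neg (Finset.mem_sdiff.1 hk).2
    have e2 : ∀ k ∈ sn m,
        (if k ∈ sn m then rr u v k (x k) else Real.sqrt (rr u v k (x k)))
          = Real.sqrt (rr u v k (x k)) * Real.sqrt (rr u v k (x k)) := fun k hk => by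
      rw [if_pos hk, Real.mul_self_sqrt (rr_pos hu hv k _).le]
    rw [Finset.prod_congr rfl e1, Finset.prod_congr rfl e2, Finset.prod_mul_distrib]
    ring
  have h0 := integral_prod_eval hμ (sn n) (fun k b => if k ∈ sn m then rr u v k b
      else Real.sqrt (rr u v k b))
  rw [show (fun x => En u v n x * En u v m x) = _ from funext hptw, h0,
    ← Finset.prod_sdiff hsub]
  have e3 : ∀ k ∈ sn m,
      ((if k ∈ sn m then rr u v k false else Real.sqrt (rr u v k false)) * u k false +
       (if k ∈ sn m then rr u v k true else Real.sqrt (rr u v k true)) * u k true) = 1 := by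
    intro k hk
    rw [if_pos hk, if_pos hk, rr, rr, div_mul_cancel₀ _ (hu k false).ne',
      div_mul_cancel₀ _ (hu k true).ne', hν1 k]
  have e4 : ∀ k ∈ sn n \ sn m,
      ((if k ∈ sn m then rr u v k false else Real.sqrt (rr u v k false)) * u k false +
       (if k ∈ sn m then rr u v k true else Real.sqrt (rr u v k true)) * u k true)
        = rho u v k := by
    intro k hk
    rw [if_neg (Finset.mem_sdiff.1 hk).2, if_neg (Finset.mem_sdiff.1 hk).2, rho_factor hu hv]
  rw [Finset.prod_congr rfl e3, Finset.prod_congr rfl e4, Finset.prod_const_one, mul_one]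


lemma rho_pos (hu : ∀ k b, 0 < u k b) (hv : ∀ k b, 0 < v k b) (k : ℤ) :
    0 < rho u v k :=
  add_pos (Real.sqrt_pos.2 (mul_pos (hu k false) (hv k false)))
    (Real.sqrt_pos.2 (mul_pos (hu k true) (hv k true)))

lemma sqrt_mul_le_half (a b : ℝ) (ha : 0 ≤ a) (hb : 0 ≤ b) :
    Real.sqrt (a * b) ≤ (a + b) / 2 := by
  have h1 : a * b ≤ ((a + b) / 2) ^ 2 := by nlinarith [sq_nonneg (a - b)]
  calc Real.sqrt (a * b) ≤ Real.sqrt (((a + b) / 2) ^ 2) := Real.sqrt_le_sqrt h1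
    _ = (a + b) / 2 := Real.sqrt_sq (by linarith)

lemma rho_le_one (hu0 : ∀ k b, 0 ≤ u k b) (hv0 : ∀ k b, 0 ≤ v k b)
    (hu1 : ∀ k, u k false + u k true = 1) (hv1 : ∀ k, v k false + v k true = 1) (k : ℤ) :
    rho u v k ≤ 1 := by
  have h1 := sqrt_mul_le_half _ _ (hu0 k false) (hv0 k false)
  have h2 := sqrt_mul_le_half _ _ (hu0 k true) (hv0 k true)
  have := hu1 k; have := hv1 k
  rw [rho]; linarith

lemma weierstrass (F : Finset ℤ) (f : ℤ → ℝ) (h : ∀ k ∈ F, 0 ≤ f k ∧ f k ≤ 1) :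
    1 - ∑ k ∈ F, (1 - f k) ≤ ∏ k ∈ F, f k := by
  classical
  induction F using Finset.induction_on with
  | empty => simp
  | insert a F hnot ih =>
    rw [Finset.sum_insert hnot, Finset.prod_insert hnot]
    have ha := h a (Finset.mem_insert_self a F)
    have hF := ih fun k hk => h k (Finset.mem_insert_of_mem hk)
    have hprod0 : (0:ℝ) ≤ ∏ k ∈ F, f k :=
      Finset.prod_nonneg fun k hk => (h k (Finset.mem_insert_of_mem hk)).1
    have hsum0 : (0:ℝ) ≤ ∑ k ∈ F, (1 - f k) :=
      Finset.sum_nonneg fun k hk => by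
        have := (h k (Finset.mem_insert_of_mem hk)).2; linarith
    nlinarith [ha.1, ha.2]

lemma prod_rho_le_one (hu0 : ∀ k b, 0 ≤ u k b) (hv0 : ∀ k b, 0 ≤ v k b)
    (hu1 : ∀ k, u k false + u k true = 1) (hv1 : ∀ k, v k false + v k true = 1)
    (F : Finset ℤ) : ∏ k ∈ F, rho u v k ≤ 1 :=
  Finset.prod_le_one (fun k _ => (add_nonneg (Real.sqrt_nonneg _) (Real.sqrt_nonneg _)))
    (fun k _ => rho_le_one hu0 hv0 hu1 hv1 k)

section Sum

/-- tail sums -/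
def tTail (u v : ℤ → Bool → ℝ) (m : ℕ) : ℝ := ∑' j : ℕ, (1 - rho u v ((j + m : ℕ) : ℤ))

lemma sum_sdiff_le_tTail (hsum : Summable fun j : ℕ => 1 - rho u v (j : ℤ))
    (hle1 : ∀ k : ℤ, rho u v k ≤ 1) {m n : ℕ} (h : m ≤ n) :
    ∑ k ∈ sn n \ sn m, (1 - rho u v k) ≤ tTail u v m := by
  rw [sn_sdiff, Finset.sum_map]
  have : ∑ j ∈ Finset.Ico m n, (1 - rho u v (emb j)) =
      ∑ i ∈ Finset.range (n - m), (1 - rho u v ((i + m : ℕ) : ℤ)) := by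
    rw [Finset.sum_Ico_eq_sum_range]
    exact Finset.sum_congr rfl fun i _ => by
      simp only [emb_apply, Function.Embedding.coeFn_mk]
      norm_num [add_comm m i]
  rw [this]
  exact ((summable_nat_add_iff m).2 hsum).sum_le_tsum _
    (fun i _ => by have := hle1 ((i + m : ℕ) : ℤ); linarith)

lemma tTail_nonneg (hle1 : ∀ k : ℤ, rho u v k ≤ 1) (m : ℕ) : 0 ≤ tTail u v m :=
  tsum_nonneg fun j => by have := hle1 ((j + m : ℕ) : ℤ); linarith

lemma tTail_tendsto (hsum : Summable fun j : ℕ => 1 - rho u v (j : ℤ)) :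
    Tendsto (tTail u v) atTop (𝓝 0) := by
  have := tendsto_sum_nat_add (fun j : ℕ => 1 - rho u v (j : ℤ))
  show Tendsto (fun m : ℕ => ∑' j : ℕ, (1 - rho u v ((j + m : ℕ) : ℤ))) atTop (𝓝 0)
  simpa using this

/-- the L¹-Cauchy estimate -/
lemma keyL1 (hu : ∀ k b, 0 < u k b) (hv : ∀ k b, 0 < v k b)
    (hu1 : ∀ k, u k false + u k true = 1) (hv1 : ∀ k, v k false + v k true = 1)
    {μ : Measure (ℤ → Bool)} (hμ : IsProductMeasure μ u)
    (hsum : Summable fun j : ℕ => 1 - rho u v (j : ℤ)) :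
    ∀ ε : ℝ, 0 < ε → ∃ M : ℕ, ∀ m n : ℕ, M ≤ m → m ≤ n →
      ∫ x, |Dn u v n x - Dn u v m x| ∂μ ≤ ε := by
  intro ε hε
  have hle1 : ∀ k : ℤ, rho u v k ≤ 1 :=
    rho_le_one (fun k b => (hu k b).le) (fun k b => (hv k b).le) hu1 hv1
  have htt := tTail_tendsto (u := u) (v := v) hsum
  have hev : ∀ᶠ m in atTop, tTail u v m ≤ ε ^ 2 / 8 :=
    htt.eventually_le_const (by positivity)
  obtain ⟨M, hM⟩ := hev.exists_forall_of_atTop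
  refine ⟨M, fun m n hMm hmn => ?_⟩
  set τ : ℝ := 4 / ε with hτdef
  have hτ : 0 < τ := by positivity
  -- integrability
  have iDsub : Integrable (fun x => |Dn u v n x - Dn u v m x|) μ :=
    integrable_dep hμ (sn n) _ (fun x x' h => by
      rw [Dn_dep n x x' h, Dn_dep m x x' (fun k hk => h k (sn_mono hmn hk))])
  have iSub : Integrable (fun x => (En u v n x - En u v m x) ^ 2) μ :=
    integrable_dep hμ (sn n) _ (fun x x' h => by
      rw [En_dep n x x' h, En_dep m x x' (fun k hk => h k (sn_mono hmn hk))])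
  have iAdd : Integrable (fun x => (En u v n x + En u v m x) ^ 2) μ :=
    integrable_dep hμ (sn n) _ (fun x x' h => by
      rw [En_dep n x x' h, En_dep m x x' (fun k hk => h k (sn_mono hmn hk))])
  have iDn : Integrable (fun x => Dn u v n x) μ :=
    integrable_dep hμ (sn n) _ (fun x x' h => Dn_dep n x x' h)
  have iDm : Integrable (fun x => Dn u v m x) μ :=
    integrable_dep hμ (sn m) _ (fun x x' h => Dn_dep m x x' h)
  have iEE : Integrable (fun x => En u v n x * En u v m x) μ :=
    integrable_dep hμ (sn n) _ (fun x x' h => by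
      rw [En_dep n x x' h, En_dep m x x' (fun k hk => h k (sn_mono hmn hk))])
  set Pi : ℝ := ∏ k ∈ sn n \ sn m, rho u v k with hPidef
  have hPile : Pi ≤ 1 :=
    Finset.prod_le_one (fun k _ => (rho_pos hu hv k).le) (fun k _ => hle1 k)
  have hPige : 1 - tTail u v m ≤ Pi := by
    have h1 := weierstrass (sn n \ sn m) (rho u v)
      (fun k _ => ⟨(rho_pos hu hv k).le, hle1 k⟩)
    have h2 := sum_sdiff_le_tTail hsum hle1 hmn
    linarith
  -- the three integral identities
  have I1 : ∫ x, (En u v n x - En u v m x) ^ 2 ∂μ = 2 - 2 * Pi := by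
    have hpt : (fun x => (En u v n x - En u v m x) ^ 2)
        = fun x => Dn u v n x + Dn u v m x - 2 * (En u v n x * En u v m x) := by
      funext x
      rw [← En_sq hu hv n x, ← En_sq hu hv m x]; ring
    have iSum : Integrable (fun x => Dn u v n x + Dn u v m x) μ := iDn.add iDm
    have iC : Integrable (fun x => 2 * (En u v n x * En u v m x)) μ := iEE.const_mul 2
    rw [hpt, integral_sub iSum iC, integral_add iDn iDm,
      integral_const_mul, int_Dn hμ hv1 hu n, int_Dn hμ hv1 hu m,
      int_EnEm hμ hv1 hu hv hmn]
    ring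
  have I2 : ∫ x, (En u v n x + En u v m x) ^ 2 ∂μ = 2 + 2 * Pi := by
    have hpt : (fun x => (En u v n x + En u v m x) ^ 2)
        = fun x => Dn u v n x + Dn u v m x + 2 * (En u v n x * En u v m x) := by
      funext x
      rw [← En_sq hu hv n x, ← En_sq hu hv m x]; ring
    have iSum : Integrable (fun x => Dn u v n x + Dn u v m x) μ := iDn.add iDm
    have iC : Integrable (fun x => 2 * (En u v n x * En u v m x)) μ := iEE.const_mul 2
    rw [hpt, integral_add iSum iC, integral_add iDn iDm,
      integral_const_mul, int_Dn hμ hv1 hu n, int_Dn hμ hv1 hu m,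
      int_EnEm hμ hv1 hu hv hmn]
    ring
  -- pointwise bound
  have hptb : ∀ x, |Dn u v n x - Dn u v m x|
      ≤ (τ * (En u v n x - En u v m x) ^ 2 + τ⁻¹ * (En u v n x + En u v m x) ^ 2) / 2 := by
    intro x
    have ha := En_nonneg (u := u) (v := v) n x
    have hb := En_nonneg (u := u) (v := v) m x
    have h1 := En_sq hu hv n x; have h2 := En_sq hu hv m x
    have key : |Dn u v n x - Dn u v m x|
        = |En u v n x - En u v m x| * (En u v n x + En u v m x) := by
      rw [← h1, ← h2, show En u v n x ^ 2 - En u v m x ^ 2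
          = (En u v n x - En u v m x) * (En u v n x + En u v m x) by ring,
        abs_mul, abs_of_nonneg (by linarith : (0:ℝ) ≤ En u v n x + En u v m x)]
    rw [key]
    have hsq : |En u v n x - En u v m x| ^ 2 = (En u v n x - En u v m x) ^ 2 := sq_abs _
    have habs : 0 ≤ |En u v n x - En u v m x| := abs_nonneg _
    have hinv : τ * τ⁻¹ = 1 := mul_inv_cancel₀ hτ.ne'
    nlinarith [sq_nonneg (τ * |En u v n x - En u v m x| - (En u v n x + En u v m x)), hτ,
      mul_pos hτ hτ]
  have hint : ∫ x, |Dn u v n x - Dn u v m x| ∂μ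
      ≤ ∫ x, (τ * (En u v n x - En u v m x) ^ 2
          + τ⁻¹ * (En u v n x + En u v m x) ^ 2) / 2 ∂μ :=
    integral_mono iDsub (((iSub.const_mul τ).add (iAdd.const_mul τ⁻¹)).div_const 2) hptb
  have hrhs : ∫ x, (τ * (En u v n x - En u v m x) ^ 2
      + τ⁻¹ * (En u v n x + En u v m x) ^ 2) / 2 ∂μ
      = (τ * (2 - 2 * Pi) + τ⁻¹ * (2 + 2 * Pi)) / 2 := by
    rw [show (fun x => (τ * (En u v n x - En u v m x) ^ 2
        + τ⁻¹ * (En u v n x + En u v m x) ^ 2) / 2)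
      = fun x => (τ * (En u v n x - En u v m x) ^ 2
        + τ⁻¹ * (En u v n x + En u v m x) ^ 2) * (1/2) from funext fun x => by ring]
    rw [integral_mul_const, integral_add (iSub.const_mul τ) (iAdd.const_mul τ⁻¹),
      integral_const_mul, integral_const_mul, I1, I2]
    ring
  have htm : tTail u v m ≤ ε ^ 2 / 8 := hM m hMm
  have htm0 : 0 ≤ tTail u v m := tTail_nonneg hle1 m
  calc ∫ x, |Dn u v n x - Dn u v m x| ∂μ
      ≤ (τ * (2 - 2 * Pi) + τ⁻¹ * (2 + 2 * Pi)) / 2 := hint.trans_eq hrhs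
    _ ≤ (τ * (2 * tTail u v m) + τ⁻¹ * 4) / 2 := by
        have : 2 - 2 * Pi ≤ 2 * tTail u v m := by linarith
        have h4 : 2 + 2 * Pi ≤ 4 := by linarith
        have hτi : 0 ≤ τ⁻¹ := (inv_nonneg).2 hτ.le
        have := mul_le_mul_of_nonneg_left this hτ.le
        have := mul_le_mul_of_nonneg_left h4 hτi
        linarith
    _ ≤ ε := by
        rw [hτdef]
        have hinv : (4 / ε)⁻¹ = ε / 4 := by
          field_simp
        rw [hinv]
        have : 4 / ε * (2 * tTail u v m) ≤ 4 / ε * (2 * (ε ^ 2 / 8)) := by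
          have h0 : (0:ℝ) ≤ 4 / ε := by positivity
          have := mul_le_mul_of_nonneg_left (by linarith : 2 * tTail u v m ≤ 2 * (ε^2/8)) h0
          linarith
        have heq : 4 / ε * (2 * (ε ^ 2 / 8)) = ε := by field_simp; ring
        rw [heq] at this
        nlinarith [this]


end Sum

lemma exists_bound (s : Finset ℤ) : ∃ N : ℕ, ∀ k ∈ s, k < N := by
  refine ⟨(s.sup fun k => k.toNat) + 1, fun k hk => ?_⟩
  have h1 : k.toNat ≤ s.sup (fun k => k.toNat) := Finset.le_sup hk
  omega

/-- integral of `Dn` against an indicator of a cylinder, for large `n` -/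
lemma setIntegral_Dn_cyl (hu : ∀ k b, 0 < u k b) {μ ν : Measure (ℤ → Bool)}
    (hμ : IsProductMeasure μ u) (hν : IsProductMeasure ν v)
    (huv : ∀ k : ℤ, k < 0 → u k = v k) (s : Finset ℤ) (y : ℤ → Bool)
    (n : ℕ) (hn : ∀ k ∈ s, k < n) :
    ∫ x in cyl s y, Dn u v n x ∂μ = (ν (cyl s y)).toReal := by
  haveI := hν.1
  have hc : ∀ x x', (∀ k ∈ s, x k = x' k) →
      (cyl s y).indicator (fun _ => (1:ℝ)) x = (cyl s y).indicator (fun _ => (1:ℝ)) x' := by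
    intro x x' h
    have : x ∈ cyl s y ↔ x' ∈ cyl s y := by
      constructor
      · intro hx i hi; rw [← h i hi]; exact hx i hi
      · intro hx i hi; rw [h i hi]; exact hx i hi
    by_cases hx : x ∈ cyl s y
    · rw [Set.indicator_of_mem hx, Set.indicator_of_mem (this.1 hx)]
    · rw [Set.indicator_of_notMem hx, Set.indicator_of_notMem (fun hx' => hx (this.2 hx'))]
  have hm := master hu hμ hν huv n s hn _ hc
  have hl : ∫ x, (cyl s y).indicator (fun _ => (1:ℝ)) x * Dn u v n x ∂μ
      = ∫ x in cyl s y, Dn u v n x ∂μ := by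
    rw [← integral_indicator (measurableSet_cyl s y)]
    congr 1; funext x
    by_cases hx : x ∈ cyl s y
    · rw [Set.indicator_of_mem hx, Set.indicator_of_mem hx, one_mul]
    · rw [Set.indicator_of_notMem hx, Set.indicator_of_notMem hx, zero_mul]
  have hr : ∫ x, (cyl s y).indicator (fun _ => (1:ℝ)) x ∂ν = (ν (cyl s y)).toReal := by
    rw [integral_indicator_const _ (measurableSet_cyl s y), smul_eq_mul, mul_one, measureReal_def]
  rw [← hl, hm, hr]

/-- Kakutani: sufficiency. -/
theorem kakutaniAC (hu : ∀ k b, 0 < u k b) (hv : ∀ k b, 0 < v k b)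
    {μ ν : Measure (ℤ → Bool)} (hμ : IsProductMeasure μ u) (hν : IsProductMeasure ν v)
    (huv : ∀ k : ℤ, k < 0 → u k = v k)
    (hsum : Summable fun j : ℕ => 1 - rho u v (j : ℤ)) :
    ν ≪ μ := by
  classical
  haveI := hμ.1; haveI := hν.1
  have hu1 := hμ.2.2.1; have hv1 := hν.2.2.1
  have iDn : ∀ n, Integrable (Dn u v n) μ := fun n =>
    integrable_dep hμ (sn n) _ (fun x x' h => Dn_dep n x x' h)
  set C : Set (ℤ → Bool) → Prop := fun A =>
    Tendsto (fun n => ∫ x in A, Dn u v n x ∂μ) atTop (𝓝 ((ν A).toReal)) with hCdef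
  have hempty : C ∅ := by
    simp only [hCdef, Measure.restrict_empty, integral_zero_measure, measure_empty,
      ENNReal.toReal_zero]
    exact tendsto_const_nhds
  have hbasic : ∀ A ∈ cylSets, C A := by
    rintro A ⟨s, y, rfl⟩
    obtain ⟨N, hN⟩ := exists_bound s
    refine tendsto_atTop_of_eventually_const (i₀ := N) fun n hn => ?_
    exact setIntegral_Dn_cyl hu hμ hν huv s y n fun k hk => lt_of_lt_of_le (hN k hk)
      (by exact_mod_cast hn)
  have hcompl : ∀ A, MeasurableSet A → C A → C Aᶜ := by
    intro A hA hCA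
    have h1 : ∀ n, ∫ x in Aᶜ, Dn u v n x ∂μ = 1 - ∫ x in A, Dn u v n x ∂μ := by
      intro n
      have := integral_add_compl hA (iDn n)
      have hint : ∫ x, Dn u v n x ∂μ = 1 := by
        have hmm := master hu hμ hν huv n ∅ (by simp) (fun _ => 1) (fun _ _ _ => rfl)
        simpa using hmm
      linarith
    have h2 : (ν Aᶜ).toReal = 1 - (ν A).toReal := by
      have hs2 : ν A + ν Aᶜ = 1 := by
        rw [measure_add_measure_compl hA, measure_univ]
      have hfin1 : ν A ≠ ⊤ := measure_ne_top ν A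
      have hfin2 : ν Aᶜ ≠ ⊤ := measure_ne_top ν Aᶜ
      have := congrArg ENNReal.toReal hs2
      rw [ENNReal.toReal_add hfin1 hfin2, ENNReal.toReal_one] at this
      linarith
    simp only [hCdef] at hCA ⊢
    rw [h2]
    simp only [h1]
    exact tendsto_const_nhds.sub hCA
  have hunion : ∀ f : ℕ → Set (ℤ → Bool), Pairwise (Function.onFun Disjoint f) →
      (∀ i, MeasurableSet (f i)) → (∀ i, C (f i)) → C (⋃ i, f i) := by
    intro f hdisj hmeas hC
    set A := ⋃ i, f i with hAdef
    have hAmeas : MeasurableSet A := MeasurableSet.iUnion hmeas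
    show Tendsto (fun n => ∫ x in A, Dn u v n x ∂μ) atTop (𝓝 ((ν A).toReal))
    rw [Metric.tendsto_atTop]
    intro ε hε
    set ε' : ℝ := ε / 8 with hε'def
    have hε' : 0 < ε' := by positivity
    obtain ⟨M, hM⟩ := keyL1 hu hv hu1 hv1 hμ hsum ε' hε'
    -- bound for Dn M
    set C0 : ℝ := ∏ k ∈ sn M, max (rr u v k false) (rr u v k true) with hC0def
    have hC0pos : 0 < C0 := Finset.prod_pos fun k _ =>
      lt_max_of_lt_left (rr_pos hu hv k false)
    have hDnM : ∀ x, Dn u v M x ≤ C0 := by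
      intro x
      refine Finset.prod_le_prod (fun k _ => (rr_pos hu hv k _).le) (fun k _ => ?_)
      cases h : x k
      · exact le_max_left _ _
      · exact le_max_right _ _
    -- tail sets
    set tail : ℕ → Set (ℤ → Bool) := fun I => ⋃ i, f (i + I) with htaildef
    have htailmeas : ∀ I, MeasurableSet (tail I) := fun I => MeasurableSet.iUnion fun i => hmeas _
    have htail_le : ∀ I, ν (tail I) ≤ ∑' i, ν (f (i + I)) := fun I => measure_iUnion_le _
    have htail_leμ : ∀ I, μ (tail I) ≤ ∑' i, μ (f (i + I)) := fun I => measure_iUnion_le _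
    have hνsum : ∑' i, ν (f i) ≠ ⊤ := by
      rw [← measure_iUnion hdisj hmeas]; exact measure_ne_top ν _
    have hμsum : ∑' i, μ (f i) ≠ ⊤ := by
      rw [← measure_iUnion hdisj hmeas]; exact measure_ne_top μ _
    have hνtail0 : Tendsto (fun I => ∑' i, ν (f (i + I))) atTop (𝓝 0) :=
      ENNReal.tendsto_sum_nat_add _ hνsum
    have hμtail0 : Tendsto (fun I => ∑' i, μ (f (i + I))) atTop (𝓝 0) :=
      ENNReal.tendsto_sum_nat_add _ hμsum
    have hνev : ∀ᶠ I in atTop, ∑' i, ν (f (i + I)) < ENNReal.ofReal ε' :=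
      hνtail0.eventually_lt_const (by simp [ENNReal.ofReal_pos, hε'])
    have hμev : ∀ᶠ I in atTop, ∑' i, μ (f (i + I)) < ENNReal.ofReal (ε' / C0) :=
      hμtail0.eventually_lt_const (by simp [ENNReal.ofReal_pos]; positivity)
    obtain ⟨I, hI1, hI2⟩ := (hνev.and hμev).exists
    -- decomposition A = F ∪ tail I
    set F : Set (ℤ → Bool) := ⋃ i ∈ Finset.range I, f i with hFdef
    have hFmeas : MeasurableSet F := Finset.measurableSet_biUnion _ fun i _ => hmeas i
    have hAeq : A = F ∪ tail I := by
      ext x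
      simp only [hAdef, hFdef, htaildef, Set.mem_iUnion, Set.mem_union, Finset.mem_range]
      constructor
      · rintro ⟨i, hi⟩
        rcases lt_or_ge i I with h | h
        · exact Or.inl ⟨i, h, hi⟩
        · exact Or.inr ⟨i - I, by rwa [Nat.sub_add_cancel h]⟩
      · rintro (⟨i, _, hi⟩ | ⟨i, hi⟩)
        · exact ⟨i, hi⟩
        · exact ⟨i + I, hi⟩
    have hdisjFT : Disjoint F (tail I) := by
      rw [Set.disjoint_iUnion_right]
      intro i
      rw [hFdef, Set.disjoint_iUnion_left]
      simp only [Set.disjoint_iUnion_left, Finset.mem_range]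
      intro j hj
      exact hdisj (by omega : j ≠ i + I)
    -- measure decomposition
    have hνdec : (ν A).toReal = (ν F).toReal + (ν (tail I)).toReal := by
      rw [hAeq, measure_union hdisjFT (htailmeas I),
        ENNReal.toReal_add (measure_ne_top _ _) (measure_ne_top _ _)]
    have hνF : (ν F).toReal = ∑ i ∈ Finset.range I, (ν (f i)).toReal := by
      rw [hFdef, measure_biUnion_finset (fun i _ => fun j _ hij => hdisj hij) fun i _ => hmeas i]
      rw [ENNReal.toReal_sum fun i _ => measure_ne_top _ _]
    -- integral decomposition
    have hintdec : ∀ n, ∫ x in A, Dn u v n x ∂μ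
        = ∑ i ∈ Finset.range I, ∫ x in f i, Dn u v n x ∂μ + ∫ x in tail I, Dn u v n x ∂μ := by
      intro n
      rw [hAeq, setIntegral_union hdisjFT (htailmeas I) ((iDn n).integrableOn)
        ((iDn n).integrableOn),
        integral_biUnion_finset _ (fun i _ => hmeas i)
          (fun i _ j _ hij => hdisj hij) (fun i _ => (iDn n).integrableOn)]
    -- the finite part converges
    have hfin : Tendsto (fun n => ∑ i ∈ Finset.range I, ∫ x in f i, Dn u v n x ∂μ) atTop
        (𝓝 (∑ i ∈ Finset.range I, (ν (f i)).toReal)) :=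
      tendsto_finset_sum _ fun i _ => hC i
    rw [Metric.tendsto_atTop] at hfin
    obtain ⟨N₂, hN₂⟩ := hfin ε' hε'
    refine ⟨max M N₂, fun n hn => ?_⟩
    have hnM : M ≤ n := le_trans (le_max_left _ _) hn
    have hnN₂ : N₂ ≤ n := le_trans (le_max_right _ _) hn
    -- tail integral bound
    have htail_int : ∫ x in tail I, Dn u v n x ∂μ ≤ 2 * ε' := by
      have h1 : ∫ x in tail I, Dn u v n x ∂μ
          ≤ ∫ x in tail I, Dn u v M x ∂μ + ε' := by
        have hsub : ∫ x in tail I, Dn u v n x ∂μ - ∫ x in tail I, Dn u v M x ∂μ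
            = ∫ x in tail I, (Dn u v n x - Dn u v M x) ∂μ := by
          rw [integral_sub ((iDn n).integrableOn) ((iDn M).integrableOn)]
        have h2 : ∫ x in tail I, (Dn u v n x - Dn u v M x) ∂μ
            ≤ ∫ x, |Dn u v n x - Dn u v M x| ∂μ := by
          have h3 : ∫ x in tail I, (Dn u v n x - Dn u v M x) ∂μ
              ≤ ∫ x in tail I, |Dn u v n x - Dn u v M x| ∂μ :=
            setIntegral_mono_on ((iDn n).integrableOn.sub ((iDn M).integrableOn))
              ((integrable_dep hμ (sn n) _ (fun x x' h => by
                rw [Dn_dep n x x' h, Dn_dep M x x' (fun k hk => h k (sn_mono hnM hk))])).integrableOn)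
              (htailmeas I) (fun x _ => le_abs_self _)
          refine h3.trans ?_
          exact setIntegral_le_integral (integrable_dep hμ (sn n) _ (fun x x' h => by
            rw [Dn_dep n x x' h, Dn_dep M x x' (fun k hk => h k (sn_mono hnM hk))]))
            (Filter.Eventually.of_forall fun x => abs_nonneg _)
        have h4 := hM M n le_rfl hnM
        linarith
      have h5 : ∫ x in tail I, Dn u v M x ∂μ ≤ C0 * (μ (tail I)).toReal := by
        have := norm_setIntegral_le_of_norm_le_const (μ := μ) (s := tail I)
          (C := C0) (f := Dn u v M) (measure_lt_top μ _)
          (fun x _ => by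
            rw [Real.norm_eq_abs, abs_of_nonneg (Dn_nonneg hu hv M x)]
            exact hDnM x)
        calc ∫ x in tail I, Dn u v M x ∂μ ≤ ‖∫ x in tail I, Dn u v M x ∂μ‖ := le_abs_self _
          _ ≤ C0 * (μ (tail I)).toReal := this
      have h6 : (μ (tail I)).toReal ≤ ε' / C0 := by
        have := (htail_leμ I).trans hI2.le
        have h7 := ENNReal.toReal_mono ENNReal.ofReal_ne_top this
        rwa [ENNReal.toReal_ofReal (by positivity)] at h7
      have : C0 * (μ (tail I)).toReal ≤ C0 * (ε' / C0) :=
        mul_le_mul_of_nonneg_left h6 hC0pos.le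
      have heq : C0 * (ε' / C0) = ε' := by field_simp
      linarith
    have htail_nonneg : 0 ≤ ∫ x in tail I, Dn u v n x ∂μ :=
      setIntegral_nonneg (htailmeas I) fun x _ => Dn_nonneg hu hv n x
    have hνtail : (ν (tail I)).toReal ≤ ε' := by
      have := (htail_le I).trans hI1.le
      have h7 := ENNReal.toReal_mono ENNReal.ofReal_ne_top this
      rwa [ENNReal.toReal_ofReal hε'.le] at h7
    have hνtail_nonneg : (0:ℝ) ≤ (ν (tail I)).toReal := ENNReal.toReal_nonneg
    have hfinb := hN₂ n hnN₂
    rw [Real.dist_eq] at hfinb ⊢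
    rw [hintdec n, hνdec, hνF]
    have : |∑ i ∈ Finset.range I, ∫ x in f i, Dn u v n x ∂μ + ∫ x in tail I, Dn u v n x ∂μ
        - (∑ i ∈ Finset.range I, (ν (f i)).toReal + (ν (tail I)).toReal)|
        ≤ |∑ i ∈ Finset.range I, ∫ x in f i, Dn u v n x ∂μ
            - ∑ i ∈ Finset.range I, (ν (f i)).toReal|
          + ∫ x in tail I, Dn u v n x ∂μ + (ν (tail I)).toReal := by
      have habs := abs_sub_abs_le_abs_sub (∫ x in tail I, Dn u v n x ∂μ) ((ν (tail I)).toReal)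
      have h8 : |∫ x in tail I, Dn u v n x ∂μ - (ν (tail I)).toReal|
          ≤ ∫ x in tail I, Dn u v n x ∂μ + (ν (tail I)).toReal :=
        abs_le.2 ⟨by linarith, by linarith⟩
      calc _ ≤ |∑ i ∈ Finset.range I, ∫ x in f i, Dn u v n x ∂μ
            - ∑ i ∈ Finset.range I, (ν (f i)).toReal|
          + |∫ x in tail I, Dn u v n x ∂μ - (ν (tail I)).toReal| := by
            rw [show ∑ i ∈ Finset.range I, ∫ x in f i, Dn u v n x ∂μ
                + ∫ x in tail I, Dn u v n x ∂μ
                - (∑ i ∈ Finset.range I, (ν (f i)).toReal + (ν (tail I)).toReal)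
              = (∑ i ∈ Finset.range I, ∫ x in f i, Dn u v n x ∂μ
                - ∑ i ∈ Finset.range I, (ν (f i)).toReal)
                + (∫ x in tail I, Dn u v n x ∂μ - (ν (tail I)).toReal) by ring]
            exact abs_add_le _ _
        _ ≤ _ := by linarith
    have hlt : |∑ i ∈ Finset.range I, ∫ x in f i, Dn u v n x ∂μ
        - ∑ i ∈ Finset.range I, (ν (f i)).toReal| < ε' := hfinb
    calc |∑ i ∈ Finset.range I, ∫ x in f i, Dn u v n x ∂μ + ∫ x in tail I, Dn u v n x ∂μ
        - (∑ i ∈ Finset.range I, (ν (f i)).toReal + (ν (tail I)).toReal)|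
        ≤ _ := this
      _ < ε' + (2 * ε' + ε') + ε' := by
          have := htail_int
          linarith
      _ ≤ ε := by rw [hε'def]; linarith
  have hAll : ∀ ⦃A : Set (ℤ → Bool)⦄, MeasurableSet A → C A :=
    MeasurableSpace.induction_on_inter generateFrom_cylSets isPiSystem_cylSets
      hempty hbasic hcompl hunion
  intro A hA0
  obtain ⟨B, hBsub, hBmeas, hB0⟩ := exists_measurable_superset_of_null hA0
  have hCB := hAll hBmeas
  have hzero : ∀ n, ∫ x in B, Dn u v n x ∂μ = 0 := by
    intro n
    rw [Measure.restrict_eq_zero.mpr hB0, integral_zero_measure]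
  rw [hCdef] at hCB
  simp only [hzero] at hCB
  have : (ν B).toReal = 0 := tendsto_nhds_unique hCB tendsto_const_nhds
  have hB : ν B = 0 := by
    rcases (ENNReal.toReal_eq_zero_iff _).1 this with h | h
    · exact h
    · exact absurd h (measure_ne_top ν B)
  exact le_antisymm ((measure_mono hBsub).trans hB.le) zero_le

/-- Kakutani: necessity (divergence implies not absolutely continuous). -/
theorem kakutaniSing (hu : ∀ k b, 0 < u k b) (hv : ∀ k b, 0 < v k b)
    {μ ν : Measure (ℤ → Bool)} (hμ : IsProductMeasure μ u) (hν : IsProductMeasure ν v)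
    (huv : ∀ k : ℤ, k < 0 → u k = v k)
    (hnsum : ¬ Summable fun j : ℕ => 1 - rho u v (j : ℤ)) :
    ¬ (ν ≪ μ) := by
  classical
  haveI := hμ.1; haveI := hν.1
  have hu1 := hμ.2.2.1; have hv1 := hν.2.2.1
  have hle1 : ∀ k : ℤ, rho u v k ≤ 1 :=
    rho_le_one (fun k b => (hu k b).le) (fun k b => (hv k b).le) hu1 hv1
  set R : ℕ → ℝ := fun n => ∏ k ∈ sn n, rho u v k with hRdef
  have hRpos : ∀ n, 0 < R n := fun n => Finset.prod_pos fun k _ => rho_pos hu hv k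
  have hRle1 : ∀ n, R n ≤ 1 := fun n =>
    Finset.prod_le_one (fun k _ => (rho_pos hu hv k).le) (fun k _ => hle1 k)
  -- R n → 0
  have hR0 : Tendsto R atTop (𝓝 0) := by
    have hS : Tendsto (fun n => ∑ j ∈ Finset.range n, (1 - rho u v (j : ℤ))) atTop atTop := by
      have hnn : ∀ j : ℕ, 0 ≤ 1 - rho u v (j : ℤ) := fun j => by
        have := hle1 (j : ℤ); linarith
      exact (not_summable_iff_tendsto_nat_atTop_of_nonneg hnn).1 hnsum
    have hbound : ∀ n, R n ≤ Real.exp (-(∑ j ∈ Finset.range n, (1 - rho u v (j : ℤ)))) := by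
      intro n
      have h1 : R n = ∏ j ∈ Finset.range n, rho u v (j : ℤ) := by
        rw [hRdef]
        exact Finset.prod_map (Finset.range n) emb (fun k => rho u v k)
      rw [h1]
      calc ∏ j ∈ Finset.range n, rho u v (j : ℤ)
          ≤ ∏ j ∈ Finset.range n, Real.exp (-(1 - rho u v (j : ℤ))) := by
            refine Finset.prod_le_prod (fun j _ => (rho_pos hu hv _).le) (fun j _ => ?_)
            have h2 := Real.add_one_le_exp (rho u v (j : ℤ) - 1)
            have h3 : Real.exp (rho u v (j : ℤ) - 1)
                = Real.exp (-(1 - rho u v (j : ℤ))) := by ring_nf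
            linarith [h3 ▸ h2]
        _ = Real.exp (∑ j ∈ Finset.range n, -(1 - rho u v (j : ℤ))) :=
            (Real.exp_sum _ _).symm
        _ = Real.exp (-(∑ j ∈ Finset.range n, (1 - rho u v (j : ℤ)))) := by
            rw [Finset.sum_neg_distrib]
    have hexp : Tendsto (fun n => Real.exp (-(∑ j ∈ Finset.range n, (1 - rho u v (j : ℤ)))))
        atTop (𝓝 0) :=
      Real.tendsto_exp_atBot.comp (tendsto_neg_atBot_iff.2 hS)
    exact squeeze_zero (fun n => (hRpos n).le) hbound hexp
  -- choose subsequence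
  have hchoice : ∀ j : ℕ, ∃ n : ℕ, R n ≤ (1/4 : ℝ) ^ j := by
    intro j
    have := (hR0.eventually_le_const (by positivity : (0:ℝ) < (1/4 : ℝ) ^ j)).exists
    exact this
  set nj : ℕ → ℕ := fun j => Classical.choose (hchoice j) with hnjdef
  have hnj : ∀ j, R (nj j) ≤ (1/4 : ℝ) ^ j := fun j => Classical.choose_spec (hchoice j)
  set δ : ℕ → ℝ := fun j => R (nj j) with hδdef
  have hδpos : ∀ j, 0 < δ j := fun j => hRpos _
  have hsqrtδ : ∀ j, Real.sqrt (δ j) ≤ (1/2 : ℝ) ^ j := by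
    intro j
    have h1 : Real.sqrt (δ j) ≤ Real.sqrt ((1/4 : ℝ) ^ j) := Real.sqrt_le_sqrt (hnj j)
    have h2 : ((1/4 : ℝ) ^ j) = ((1/2 : ℝ) ^ j) ^ 2 := by
      rw [← pow_mul, show (1/4 : ℝ) = (1/2 : ℝ)^2 by norm_num, ← pow_mul]
      ring_nf
    rw [h2, Real.sqrt_sq (by positivity)] at h1
    exact h1
  -- the sets
  set A : ℕ → Set (ℤ → Bool) := fun j => {x | δ j ≤ Dn u v (nj j) x} with hAdef
  have hAmeas : ∀ j, MeasurableSet (A j) :=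
    fun j => (measurable_Dn (nj j)) measurableSet_Ici
  -- μ bound
  have hμA : ∀ j, μ (A j) ≤ ENNReal.ofReal ((1/2 : ℝ) ^ j) := by
    intro j
    have hAeq : A j = {x | Real.sqrt (δ j) ≤ En u v (nj j) x} := by
      ext x
      simp only [hAdef, Set.mem_setOf_eq]
      constructor
      · intro h
        have h2 : Real.sqrt (δ j) ≤ Real.sqrt (Dn u v (nj j) x) := Real.sqrt_le_sqrt h
        rwa [← En_sq hu hv (nj j) x, Real.sqrt_sq (En_nonneg _ x)] at h2
      · intro h
        have h2 : δ j = Real.sqrt (δ j) ^ 2 := (Real.sq_sqrt (hδpos j).le).symm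
        rw [h2, ← En_sq hu hv (nj j) x]
        exact pow_le_pow_left₀ (Real.sqrt_nonneg _) h 2
    have hEint : Integrable (En u v (nj j)) μ :=
      integrable_dep hμ (sn (nj j)) _ (fun x x' h => En_dep _ x x' h)
    have hmark := mul_meas_ge_le_integral_of_nonneg
      (Filter.Eventually.of_forall fun x => En_nonneg (u := u) (v := v) (nj j) x)
      hEint (Real.sqrt (δ j))
    rw [int_En hμ hu hv (nj j)] at hmark
    have hAr : Real.sqrt (δ j) * (μ (A j)).toReal ≤ R (nj j) := by
      rw [hAeq]; exact hmark
    have hsp : 0 < Real.sqrt (δ j) := Real.sqrt_pos.2 (hδpos j)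
    have hA2 : (μ (A j)).toReal ≤ R (nj j) / Real.sqrt (δ j) :=
      (le_div_iff₀ hsp).2 (by rwa [mul_comm] at hAr)
    have hdiv : R (nj j) / Real.sqrt (δ j) = Real.sqrt (δ j) := by
      rw [hδdef]; exact Real.div_sqrt
    rw [hdiv] at hA2
    calc μ (A j) = ENNReal.ofReal ((μ (A j)).toReal) :=
          (ENNReal.ofReal_toReal (measure_ne_top μ _)).symm
      _ ≤ ENNReal.ofReal ((1/2 : ℝ) ^ j) :=
          ENNReal.ofReal_le_ofReal (hA2.trans (hsqrtδ j))
  -- ν bound on complements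
  have hνB : ∀ j, ν ((A j)ᶜ) ≤ ENNReal.ofReal ((1/2 : ℝ) ^ j) := by
    intro j
    set B := (A j)ᶜ with hBdef
    have hBmeas : MeasurableSet B := (hAmeas j).compl
    have hBdep : ∀ x x', (∀ k ∈ sn (nj j), x k = x' k) → (x ∈ B ↔ x' ∈ B) := by
      intro x x' h
      simp only [hBdef, hAdef, Set.mem_compl_iff, Set.mem_setOf_eq, not_le]
      rw [Dn_dep (nj j) x x' h]
    have hc : ∀ x x', (∀ k ∈ sn (nj j), x k = x' k) →
        B.indicator (fun _ => (1:ℝ)) x = B.indicator (fun _ => (1:ℝ)) x' := by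
      intro x x' h
      by_cases hx : x ∈ B
      · rw [Set.indicator_of_mem hx, Set.indicator_of_mem ((hBdep x x' h).1 hx)]
      · rw [Set.indicator_of_notMem hx,
          Set.indicator_of_notMem (fun hx' => hx ((hBdep x x' h).2 hx'))]
    have hm := master hu hμ hν huv (nj j) (sn (nj j)) (fun k hk => (mem_sn.1 hk).2) _ hc
    have hl : ∫ x, B.indicator (fun _ => (1:ℝ)) x * Dn u v (nj j) x ∂μ
        = ∫ x in B, Dn u v (nj j) x ∂μ := by
      rw [← integral_indicator hBmeas]
      congr 1; funext x
      by_cases hx : x ∈ B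
      · rw [Set.indicator_of_mem hx, Set.indicator_of_mem hx, one_mul]
      · rw [Set.indicator_of_notMem hx, Set.indicator_of_notMem hx, zero_mul]
    have hr : ∫ x, B.indicator (fun _ => (1:ℝ)) x ∂ν = (ν B).toReal := by
      rw [integral_indicator_const _ hBmeas, smul_eq_mul, mul_one, measureReal_def]
    have hDint : Integrable (Dn u v (nj j)) μ :=
      integrable_dep hμ (sn (nj j)) _ (fun x x' h => Dn_dep _ x x' h)
    have hEint : Integrable (En u v (nj j)) μ :=
      integrable_dep hμ (sn (nj j)) _ (fun x x' h => En_dep _ x x' h)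
    -- ∫_B Dn ≤ √δ * ∫ En
    have hptB : ∀ x ∈ B, Dn u v (nj j) x ≤ Real.sqrt (δ j) * En u v (nj j) x := by
      intro x hx
      have hlt : Dn u v (nj j) x < δ j := by
        simpa [hBdef, hAdef, not_le] using hx
      have hEx := En_nonneg (u := u) (v := v) (nj j) x
      have h2 : En u v (nj j) x < Real.sqrt (δ j) := by
        have := Real.sqrt_lt_sqrt (Dn_nonneg hu hv _ x) hlt
        rwa [← En_sq hu hv (nj j) x, Real.sqrt_sq hEx] at this
      nlinarith [En_sq hu hv (nj j) x]
    have hint1 : ∫ x in B, Dn u v (nj j) x ∂μ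
        ≤ ∫ x in B, Real.sqrt (δ j) * En u v (nj j) x ∂μ :=
      setIntegral_mono_on hDint.integrableOn (hEint.const_mul _).integrableOn hBmeas hptB
    have hint2 : ∫ x in B, Real.sqrt (δ j) * En u v (nj j) x ∂μ
        ≤ Real.sqrt (δ j) * ∫ x, En u v (nj j) x ∂μ := by
      rw [integral_const_mul]
      refine mul_le_mul_of_nonneg_left ?_ (Real.sqrt_nonneg _)
      exact setIntegral_le_integral hEint
        (Filter.Eventually.of_forall fun x => En_nonneg _ x)
    have hint3 : (ν B).toReal ≤ Real.sqrt (δ j) * R (nj j) := by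
      rw [← hr, ← hm, hl]
      calc ∫ x in B, Dn u v (nj j) x ∂μ ≤ _ := hint1
        _ ≤ Real.sqrt (δ j) * ∫ x, En u v (nj j) x ∂μ := hint2
        _ = Real.sqrt (δ j) * R (nj j) := by rw [int_En hμ hu hv]
    have hint4 : (ν B).toReal ≤ (1/2 : ℝ) ^ j := by
      have h5 : Real.sqrt (δ j) * R (nj j) ≤ Real.sqrt (δ j) * 1 :=
        mul_le_mul_of_nonneg_left (hRle1 _) (Real.sqrt_nonneg _)
      rw [mul_one] at h5
      exact hint3.trans (h5.trans (hsqrtδ j))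
    calc ν B = ENNReal.ofReal ((ν B).toReal) := (ENNReal.ofReal_toReal (measure_ne_top ν B)).symm
      _ ≤ ENNReal.ofReal ((1/2 : ℝ) ^ j) := ENNReal.ofReal_le_ofReal hint4
  -- Borel–Cantelli
  have hgeom : ∑' j : ℕ, ENNReal.ofReal ((1/2 : ℝ) ^ j) ≠ ⊤ := by
    have hterm : ∀ j : ℕ, ENNReal.ofReal ((1/2 : ℝ) ^ j) = (2 : ℝ≥0∞)⁻¹ ^ j := by
      intro j
      rw [ENNReal.ofReal_pow (by norm_num)]
      congr 1
      rw [show (1/2 : ℝ) = (2:ℝ)⁻¹ by norm_num,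
        ENNReal.ofReal_inv_of_pos (by norm_num)]
      norm_num
    rw [tsum_congr hterm, ENNReal.tsum_geometric]
    have hlt : (2 : ℝ≥0∞)⁻¹ < 1 := ENNReal.inv_lt_one.2 (by norm_num)
    have hpos : 0 < 1 - (2 : ℝ≥0∞)⁻¹ := tsub_pos_of_lt hlt
    exact ENNReal.inv_ne_top.2 hpos.ne'
  have hμlimsup : μ (limsup A atTop) = 0 :=
    measure_limsup_atTop_eq_zero
      ((ENNReal.tsum_le_tsum fun j => hμA j).trans_lt (lt_of_le_of_ne le_top hgeom)).ne
  have hνlimsup : ν (limsup (fun j => (A j)ᶜ) atTop) = 0 :=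
    measure_limsup_atTop_eq_zero
      ((ENNReal.tsum_le_tsum fun j => hνB j).trans_lt (lt_of_le_of_ne le_top hgeom)).ne
  intro hac
  have h0 : ν (limsup A atTop) = 0 := hac hμlimsup
  have hcompl : (limsup A atTop)ᶜ ⊆ limsup (fun j => (A j)ᶜ) atTop := by
    rw [Filter.limsup_compl]
    exact Filter.liminf_le_limsup
  have h1 : ν ((limsup A atTop)ᶜ) = 0 :=
    le_antisymm ((measure_mono hcompl).trans hνlimsup.le) zero_le
  have : (1 : ℝ≥0∞) = 0 := by
    have := measure_union_le (μ := ν) (limsup A atTop) ((limsup A atTop)ᶜ)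
    rw [Set.union_compl_self, measure_univ, h0, h1, add_zero] at this
    exact le_antisymm this zero_le
  exact one_ne_zero this

end Kakutani

lemma measurable_shift (n : ℤ) : Measurable (shift n) :=
  measurable_pi_lambda _ fun k => measurable_pi_apply (k + n)

def embshift : ℤ ↪ ℤ := ⟨fun i => i + 1, add_left_injective 1⟩

lemma isProductMeasure_map_shift {P : Measure (ℤ → Bool)} {p : ℤ → Bool → ℝ}
    (hP : IsProductMeasure P p) :
    IsProductMeasure (P.map (shift 1)) (fun k => p (k + 1)) := by
  haveI := hP.1
  refine ⟨Measure.isProbabilityMeasure_map (measurable_shift 1).aemeasurable,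
    fun k b => hP.2.1 (k+1) b, fun k => hP.2.2.1 (k+1), ?_⟩
  intro s y
  have hms : MeasurableSet {x : ℤ → Bool | ∀ i ∈ s, x i = y i} := measurableSet_cyl s y
  rw [Measure.map_apply (measurable_shift 1) hms]
  have hset : shift 1 ⁻¹' {x : ℤ → Bool | ∀ i ∈ s, x i = y i}
      = {x : ℤ → Bool | ∀ j ∈ s.map embshift, x j = y (j - 1)} := by
    ext x
    simp only [Set.mem_preimage, Set.mem_setOf_eq, shift, Finset.mem_map, embshift,
      Function.Embedding.coeFn_mk]
    constructor
    · rintro h j ⟨i, hi, rfl⟩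
      have := h i hi
      simpa using this
    · intro h i hi
      have := h (i + 1) ⟨i, hi, rfl⟩
      simpa using this
  rw [hset, hP.2.2.2 (s.map embshift) (fun j => y (j - 1)), Finset.prod_map]
  refine Finset.prod_congr rfl fun i _ => ?_
  simp [embshift]

lemma single_coord {P : Measure (ℤ → Bool)} {p : ℤ → Bool → ℝ}
    (hP : IsProductMeasure P p) (k : ℤ) (b : Bool) :
    P {x | x k = b} = ENNReal.ofReal (p k b) := by
  have h := hP.2.2.2 {k} (fun _ => b)
  simpa using h

lemma pos_of_nonsingular {P : Measure (ℤ → Bool)} {p : ℤ → Bool → ℝ}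
    (hP : IsProductMeasure P p) (hhs : HalfStationary p) (hns : Nonsingular P) :
    ∀ n : ℤ, 1 ≤ n → 0 < p n false ∧ p n false < 1 := by
  have hnn := hP.2.1
  have hsum1 := hP.2.2.1
  -- single coordinate sets under the image measure
  have hQ : ∀ (k : ℤ) (b : Bool), (P.map (shift 1)) {x | x k = b}
      = ENNReal.ofReal (p (k + 1) b) := fun k b =>
    single_coord (isProductMeasure_map_shift hP) k b
  -- propagate nonvanishing
  have hstep : ∀ (k : ℤ) (b : Bool), p k b ≠ 0 → p (k + 1) b ≠ 0 := by
    intro k b hk h1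
    have hQ0 : (P.map (shift 1)) {x | x k = b} = 0 := by rw [hQ k b, h1]; simp
    have hP0 : P {x | x k = b} = 0 := hns.1 hQ0
    rw [single_coord hP k b, ENNReal.ofReal_eq_zero] at hP0
    exact hk (le_antisymm hP0 (hnn k b))
  have htrue : ∀ k : ℤ, k ≤ 0 → p k true = 1/2 := by
    intro k hk
    have := hsum1 k
    have := hhs k hk
    linarith
  have hind : ∀ (n : ℕ) (b : Bool), p (n : ℤ) b ≠ 0 := by
    intro n
    induction n with
    | zero =>
      intro b
      cases b
      · rw [show ((0:ℕ):ℤ) = 0 by norm_num, hhs 0 le_rfl]; norm_num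
      · rw [show ((0:ℕ):ℤ) = 0 by norm_num, htrue 0 le_rfl]; norm_num
    | succ n ih =>
      intro b
      have := hstep (n : ℤ) b (ih b)
      rwa [show ((n:ℤ) + 1) = ((n+1 : ℕ) : ℤ) by push_cast; ring] at this
  intro n hn
  have h1 : p n false ≠ 0 := by
    have := hind n.toNat false
    rwa [Int.toNat_of_nonneg (by omega)] at this
  have h2 : p n true ≠ 0 := by
    have := hind n.toNat true
    rwa [Int.toNat_of_nonneg (by omega)] at this
  have h3 := hsum1 n
  have h4 := hnn n false
  have h5 := hnn n true
  constructor
  · exact lt_of_le_of_ne h4 (Ne.symm h1)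
  · have : 0 < p n true := lt_of_le_of_ne h5 (Ne.symm h2)
    linarith


/-- For a half-stationary product measure `P` on `{0,1}^ℤ`, the shift is
nonsingular iff `0 < P_n(0) < 1` for all `n ≥ 1` and
`∑_{k=0}^∞ [(√P_k(0) − √P_{k+1}(0))² + (√P_k(1) − √P_{k+1}(1))²] < ∞`. -/
theorem nonsingular_iff (P : Measure (ℤ → Bool)) (p : ℤ → Bool → ℝ)
    (hP : IsProductMeasure P p) (hhs : HalfStationary p) :
    Nonsingular P ↔
      ((∀ n : ℤ, 1 ≤ n → 0 < p n false ∧ p n false < 1) ∧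
        Summable fun k : ℕ =>
          (Real.sqrt (p (k : ℤ) false) - Real.sqrt (p ((k : ℤ) + 1) false)) ^ 2 +
          (Real.sqrt (p (k : ℤ) true) - Real.sqrt (p ((k : ℤ) + 1) true)) ^ 2) := by
  have hnn := hP.2.1
  have hsum1 := hP.2.2.1
  have htrue : ∀ k : ℤ, k ≤ 0 → p k true = 1/2 := by
    intro k hk
    have := hsum1 k; have := hhs k hk; linarith
  set v : ℤ → Bool → ℝ := fun k => p (k + 1) with hvdef
  have hQ : IsProductMeasure (P.map (shift 1)) v := isProductMeasure_map_shift hP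
  have huv : ∀ k : ℤ, k < 0 → p k = v k := by
    intro k hk
    funext b
    cases b
    · rw [hvdef]; simp only []
      rw [hhs k (by omega), hhs (k+1) (by omega)]
    · rw [hvdef]; simp only []
      rw [htrue k (by omega), htrue (k+1) (by omega)]
  have hvu : ∀ k : ℤ, k < 0 → v k = p k := fun k hk => (huv k hk).symm
  have hrho_comm : rho v p = rho p v := by
    funext k
    rw [rho, rho, mul_comm (v k false), mul_comm (v k true)]
  -- relation between the theorem's summand and 1 - rho
  have hterm : ∀ (hap : ∀ k b, 0 < p k b) (k : ℕ),
      (Real.sqrt (p (k : ℤ) false) - Real.sqrt (p ((k : ℤ) + 1) false)) ^ 2 +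
      (Real.sqrt (p (k : ℤ) true) - Real.sqrt (p ((k : ℤ) + 1) true)) ^ 2
      = 2 * (1 - rho p v (k : ℤ)) := by
    intro hap k
    have e1 : ∀ b, (Real.sqrt (p (k:ℤ) b) - Real.sqrt (p ((k:ℤ)+1) b)) ^ 2
        = p (k:ℤ) b + p ((k:ℤ)+1) b - 2 * Real.sqrt (p (k:ℤ) b * p ((k:ℤ)+1) b) := by
      intro b
      have hm : Real.sqrt (p (k:ℤ) b * p ((k:ℤ)+1) b)
          = Real.sqrt (p (k:ℤ) b) * Real.sqrt (p ((k:ℤ)+1) b) :=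
        Real.sqrt_mul (hnn _ b) _
      rw [sub_sq, Real.sq_sqrt (hnn _ b), Real.sq_sqrt (hnn _ b), hm]
      ring
    rw [e1 false, e1 true, rho]
    have h1 := hsum1 (k : ℤ)
    have h2 := hsum1 ((k:ℤ)+1)
    rw [hvdef]
    simp only []
    linarith
  constructor
  · intro hns
    have hpos := pos_of_nonsingular hP hhs hns
    have hap : ∀ k b, 0 < p k b := by
      intro k b
      rcases le_or_gt k 0 with h | h
      · cases b
        · rw [hhs k h]; norm_num
        · rw [htrue k h]; norm_num
      · rcases hpos k (by omega) with ⟨h1, h2⟩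
        cases b
        · exact h1
        · have := hsum1 k; linarith
    refine ⟨hpos, ?_⟩
    by_contra hnsum
    have hnsum' : ¬ Summable fun j : ℕ => 1 - rho p v (j : ℤ) := by
      intro hs
      exact hnsum (by
        have := hs.mul_left 2
        refine this.congr fun k => ?_
        exact (hterm hap k).symm)
    have hav : ∀ k b, 0 < v k b := fun k b => hap (k+1) b
    exact kakutaniSing hap hav hP hQ huv hnsum' hns.2
  · rintro ⟨hpos, hsum⟩
    have hap : ∀ k b, 0 < p k b := by
      intro k b
      rcases le_or_gt k 0 with h | h
      · cases b
        · rw [hhs k h]; norm_num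
        · rw [htrue k h]; norm_num
      · rcases hpos k (by omega) with ⟨h1, h2⟩
        cases b
        · exact h1
        · have := hsum1 k; linarith
    have hav : ∀ k b, 0 < v k b := fun k b => hap (k+1) b
    have hsum' : Summable fun j : ℕ => 1 - rho p v (j : ℤ) := by
      have := hsum.div_const 2
      refine this.congr fun k => ?_
      rw [hterm hap k]; ring
    constructor
    · -- P ≪ P.map (shift 1)
      refine kakutaniAC hav hap hQ hP hvu ?_
      rw [hrho_comm]
      exact hsum'
    · exact kakutaniAC hap hav hP hQ huv hsum'


end NSB
end
end

section
/- Let P be a half-stationary product measure on X = {0,1}^ℤ for which the shift T is nonsingular and conservative, and suppose there exists no absolutely continuous invariant probability. Then 0 is a limit point of the sequence a_n = 1 − 2P_n(0); that is, there is a strictly increasing sequence n_k → ∞ with P_{n_k}(0) → 1/2. -/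
open MeasureTheory Filter Topology
open scoped ENNReal

noncomputable section

namespace NSB

/-! ### Auxiliary machinery for the proof of Statement 6 -/

section Aux6

lemma shift_measurable (m : ℤ) : Measurable (shift m) :=
  measurable_pi_lambda _ fun k => measurable_pi_apply (k + m)

lemma cylMeasurable (s : Finset ℤ) (y : ℤ → Bool) :
    MeasurableSet {x : ℤ → Bool | ∀ i ∈ s, x i = y i} := by
  have h : {x : ℤ → Bool | ∀ i ∈ s, x i = y i}
      = ⋂ i ∈ s, (fun x : ℤ → Bool => x i) ⁻¹' {y i} := by
    ext x; simp [Set.mem_iInter]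
  rw [h]
  exact MeasurableSet.biInter s.countable_toSet fun i _ =>
    (measurable_pi_apply i) (measurableSet_singleton (y i))

lemma lintegral_prod_coords (μ : Measure (ℤ → Bool)) (q' : ℤ → Bool → ℝ)
    (hq : ∀ (s : Finset ℤ) (y : ℤ → Bool),
      μ {x | ∀ i ∈ s, x i = y i} = ∏ i ∈ s, ENNReal.ofReal (q' i (y i)))
    (s : Finset ℤ) (w : ℤ → Bool → ℝ≥0∞) :
    ∫⁻ x, ∏ i ∈ s, w i (x i) ∂μ
      = ∏ i ∈ s, (w i false * ENNReal.ofReal (q' i false)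
                + w i true * ENNReal.ofReal (q' i true)) := by
  classical
  set ι := {i // i ∈ s}
  let Y : (ι → Bool) → (ℤ → Bool) := fun y i => if h : i ∈ s then y ⟨i, h⟩ else false
  have hpt : ∀ x : ℤ → Bool, ∏ i ∈ s, w i (x i) =
      ∑ y : ι → Bool, Set.indicator {z : ℤ → Bool | ∀ i ∈ s, z i = Y y i}
        (fun _ => ∏ i ∈ s, w i (Y y i)) x := by
    intro x
    set y₀ : ι → Bool := fun i => x i.1 with hy₀
    rw [Finset.sum_eq_single y₀]
    · have hx : x ∈ {z : ℤ → Bool | ∀ i ∈ s, z i = Y y₀ i} := by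
        intro i hi; simp [Y, dif_pos hi, y₀]
      rw [Set.indicator_of_mem hx]
      refine Finset.prod_congr rfl fun i hi => ?_
      simp [Y, dif_pos hi, y₀]
    · intro y _ hy
      have hx : x ∉ {z : ℤ → Bool | ∀ i ∈ s, z i = Y y i} := by
        intro hmem
        apply hy
        funext i
        have := hmem i.1 i.2
        simp only [Y, dif_pos i.2] at this
        simp [y₀, this]
      rw [Set.indicator_of_notMem hx]
    · intro h; exact absurd (Finset.mem_univ y₀) h
  calc ∫⁻ x, ∏ i ∈ s, w i (x i) ∂μ
      = ∫⁻ x, ∑ y : ι → Bool, Set.indicator {z : ℤ → Bool | ∀ i ∈ s, z i = Y y i}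
          (fun _ => ∏ i ∈ s, w i (Y y i)) x ∂μ := by
        refine lintegral_congr fun x => hpt x
    _ = ∑ y : ι → Bool, (∏ i ∈ s, w i (Y y i)) * μ {z : ℤ → Bool | ∀ i ∈ s, z i = Y y i} := by
        rw [lintegral_finset_sum]
        · refine Finset.sum_congr rfl fun y _ => ?_
          rw [lintegral_indicator_const (cylMeasurable s (Y y))]
        · exact fun y _ => (measurable_const.indicator (cylMeasurable s (Y y)))
    _ = ∑ y : ι → Bool, ∏ i ∈ s, (w i (Y y i) * ENNReal.ofReal (q' i (Y y i))) := by
        refine Finset.sum_congr rfl fun y _ => ?_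
        rw [hq s (Y y), ← Finset.prod_mul_distrib]
    _ = ∑ y : ι → Bool, ∏ i : ι, (w i.1 (y i) * ENNReal.ofReal (q' i.1 (y i))) := by
        refine Finset.sum_congr rfl fun y _ => ?_
        rw [← Finset.prod_attach s (fun i => w i (Y y i) * ENNReal.ofReal (q' i (Y y i))),
          Finset.univ_eq_attach]
        refine Finset.prod_congr rfl fun i _ => ?_
        simp [Y, dif_pos i.2]
    _ = ∏ i : ι, (w i.1 false * ENNReal.ofReal (q' i.1 false)
          + w i.1 true * ENNReal.ofReal (q' i.1 true)) := by
        rw [← Fintype.piFinset_univ,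
          ← Finset.prod_univ_sum (fun _ : ι => (Finset.univ : Finset Bool))
            (fun i b => w i.1 b * ENNReal.ofReal (q' i.1 b))]
        refine Finset.prod_congr rfl fun i _ => ?_
        rw [Fintype.sum_bool]
        ring
    _ = ∏ i ∈ s, (w i false * ENNReal.ofReal (q' i false)
          + w i true * ENNReal.ofReal (q' i true)) := by
        rw [Finset.univ_eq_attach]
        exact Finset.prod_attach s (fun i => w i false * ENNReal.ofReal (q' i false)
          + w i true * ENNReal.ofReal (q' i true))

variable {α : Type*} [MeasurableSpace α]

lemma setLintegral_sqrt_rnDeriv_le (Q Pm : Measure α) [IsFiniteMeasure Q] [IsFiniteMeasure Pm]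
    (A : Set α) : ∫⁻ x in A, Q.rnDeriv Pm x ^ (2⁻¹ : ℝ) ∂Pm
      ≤ (Q A) ^ (2⁻¹ : ℝ) * (Pm A) ^ (2⁻¹ : ℝ) := by
  have h := ENNReal.lintegral_mul_norm_pow_le (μ := Pm.restrict A)
    (Q.measurable_rnDeriv Pm).aemeasurable (aemeasurable_const (b := (1:ℝ≥0∞)))
    (p := 2⁻¹) (q := 2⁻¹) (by norm_num) (by norm_num) (by norm_num)
  simp only [ENNReal.one_rpow, mul_one, lintegral_one, Measure.restrict_apply MeasurableSet.univ,
    Set.univ_inter] at h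
  exact h.trans (mul_le_mul_left
    (ENNReal.rpow_le_rpow (Measure.setLIntegral_rnDeriv_le A) (by norm_num)) _)

lemma lintegral_sqrt_rnDeriv_le (Q Pm : Measure α) [IsProbabilityMeasure Q]
    [IsProbabilityMeasure Pm] (A : Set α) (hA : MeasurableSet A) :
    ∫⁻ x, Q.rnDeriv Pm x ^ (2⁻¹ : ℝ) ∂Pm ≤ (Q A) ^ (2⁻¹ : ℝ) + (Pm Aᶜ) ^ (2⁻¹ : ℝ) := by
  rw [← lintegral_add_compl (fun x => Q.rnDeriv Pm x ^ (2⁻¹ : ℝ)) hA]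
  have h1 : ∫⁻ x in A, Q.rnDeriv Pm x ^ (2⁻¹ : ℝ) ∂Pm ≤ (Q A) ^ (2⁻¹ : ℝ) := by
    refine (setLintegral_sqrt_rnDeriv_le Q Pm A).trans ?_
    calc (Q A) ^ (2⁻¹:ℝ) * (Pm A) ^ (2⁻¹:ℝ) ≤ (Q A) ^ (2⁻¹:ℝ) * 1 ^ (2⁻¹:ℝ) := by
          gcongr; exact prob_le_one
      _ = (Q A) ^ (2⁻¹:ℝ) := by rw [ENNReal.one_rpow, mul_one]
  have h2 : ∫⁻ x in Aᶜ, Q.rnDeriv Pm x ^ (2⁻¹ : ℝ) ∂Pm ≤ (Pm Aᶜ) ^ (2⁻¹ : ℝ) := by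
    refine (setLintegral_sqrt_rnDeriv_le Q Pm Aᶜ).trans ?_
    calc (Q Aᶜ) ^ (2⁻¹:ℝ) * (Pm Aᶜ) ^ (2⁻¹:ℝ) ≤ 1 ^ (2⁻¹:ℝ) * (Pm Aᶜ) ^ (2⁻¹:ℝ) := by
          gcongr; exact prob_le_one
      _ = (Pm Aᶜ) ^ (2⁻¹:ℝ) := by rw [ENNReal.one_rpow, one_mul]
  exact add_le_add h1 h2

lemma markov_aux (μ : Measure α) {G : α → ℝ≥0∞} (hG : AEMeasurable G μ) {ε : ℝ≥0∞}
    (h0 : ε ≠ 0) (htop : ε ≠ ⊤) :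
    μ {x | ε ≤ G x} ≤ ε⁻¹ * ∫⁻ x, G x ∂μ := by
  have h := mul_meas_ge_le_lintegral₀ hG ε
  calc μ {x | ε ≤ G x} = ε⁻¹ * (ε * μ {x | ε ≤ G x}) := by
        rw [← mul_assoc, ENNReal.inv_mul_cancel h0 htop, one_mul]
    _ ≤ ε⁻¹ * ∫⁻ x, G x ∂μ := by gcongr

lemma subseq_of_limit_point (p : ℤ → Bool → ℝ)
    (hcon : ¬ ∃ nk : ℕ → ℕ, StrictMono nk ∧ (∀ k, 1 ≤ nk k) ∧
      Tendsto (fun k => p (nk k : ℤ) false) atTop (nhds (1 / 2))) :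
    ∃ ε : ℝ, 0 < ε ∧ ε ≤ 1/2 ∧ ∃ N : ℕ, 1 ≤ N ∧
      ∀ n : ℕ, N ≤ n → ε ≤ |p (n:ℤ) false - 1/2| := by
  by_contra hkey
  push_neg at hkey
  have H : ∀ k N : ℕ, ∃ n : ℕ, max N 1 ≤ n ∧ |p (n:ℤ) false - 1/2| < 1/(2*(k+1)) := by
    intro k N
    have hpos : (0:ℝ) < 1/(2*(k+1)) := by positivity
    have hle : (1:ℝ)/(2*(k+1)) ≤ 1/2 := by
      rw [div_le_div_iff₀ (by positivity) (by norm_num)]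
      have : (1:ℝ) ≤ (k:ℝ)+1 := by exact_mod_cast Nat.one_le_iff_ne_zero.mpr (Nat.succ_ne_zero k)
      nlinarith
    obtain ⟨n, hn1, hn2⟩ := hkey _ hpos hle (max N 1) (le_max_right _ _)
    exact ⟨n, hn1, hn2⟩
  obtain ⟨g, hgdef0, hgdefs⟩ : ∃ g : ℕ → ℕ, g 0 = Classical.choose (H 0 0) ∧
      ∀ k, g (k+1) = Classical.choose (H (k+1) (g k + 1)) :=
    ⟨fun k => Nat.rec (Classical.choose (H 0 0))
      (fun k ih => Classical.choose (H (k+1) (ih+1))) k, rfl, fun _ => rfl⟩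
  have hg0 := Classical.choose_spec (H 0 0)
  rw [← hgdef0] at hg0
  have hgs : ∀ k, max (g k + 1) 1 ≤ g (k+1) ∧
      |p ((g (k+1) : ℕ) : ℤ) false - 1/2| < 1/(2*(((k+1):ℕ)+1)) := by
    intro k
    have h := Classical.choose_spec (H (k+1) (g k + 1))
    rw [← hgdefs k] at h
    exact h
  have hmono : StrictMono g := strictMono_nat_of_lt_succ fun k => by
    have := (hgs k).1
    omega
  have hone : ∀ k, 1 ≤ g k := by
    intro k
    cases k with
    | zero => exact le_trans (le_max_right _ _) hg0.1
    | succ k => exact le_trans (le_max_right _ _) (hgs k).1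
  have hbnd : ∀ k : ℕ, |p (((g k : ℕ) : ℤ)) false - (1/2 : ℝ)| < 1/(2*((k:ℝ)+1)) := by
    intro k
    cases k with
    | zero => simpa using hg0.2
    | succ k => have := (hgs k).2; push_cast at this ⊢; convert this using 2
  refine hcon ⟨g, hmono, hone, ?_⟩
  rw [tendsto_iff_dist_tendsto_zero]
  have hlim : Tendsto (fun k : ℕ => 1/(2*((k:ℝ)+1))) atTop (nhds 0) := by
    have h2 : Tendsto (fun k : ℕ => ((1:ℝ)/2) * (1/((k:ℝ)+1))) atTop (nhds (((1:ℝ)/2) * 0)) :=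
      (tendsto_one_div_add_atTop_nhds_zero_nat).const_mul _
    simpa [one_div, mul_comm, mul_assoc, mul_inv] using h2
  refine squeeze_zero (fun k => dist_nonneg) (fun k => ?_) hlim
  rw [Real.dist_eq]
  exact (hbnd k).le

variable {ε : ℝ}

lemma num_u_one (hε0 : 0 < ε) : (1:ℝ) ≤ ((1+ε) + (1+ε)⁻¹)/2 := by
  have hr : (0:ℝ) < 1 + ε := by linarith
  have h := mul_inv_cancel₀ hr.ne'
  have hi : (0:ℝ) < (1+ε)⁻¹ := by positivity
  nlinarith [sq_nonneg (1 + ε - 1), sq_nonneg ε]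

lemma num_w0_pos (hε0 : 0 < ε) (hεh : ε ≤ 1/2) :
    (0:ℝ) < ((1+ε) + (1+ε)⁻¹)/2 - ε * ((1+ε) - (1+ε)⁻¹) := by
  have hr : (0:ℝ) < 1 + ε := by linarith
  have h := mul_inv_cancel₀ hr.ne'
  have hi : (0:ℝ) < (1+ε)⁻¹ := by positivity
  nlinarith

lemma num_F (hε0 : 0 < ε) (hεh : ε ≤ 1/2) :
    (((1+ε) + (1+ε)⁻¹)/2) * (((1+ε) + (1+ε)⁻¹)/2 - ε * ((1+ε) - (1+ε)⁻¹))
      ≤ 1 - ε^2/2 := by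
  have hr : (0:ℝ) < 1 + ε := by linarith
  have hinv : (1+ε)⁻¹ = 1/(1+ε) := by rw [one_div]
  rw [hinv]
  have h2 : (0:ℝ) < (1+ε)^2 := by positivity
  rw [show (1 + ε + 1 / (1 + ε)) / 2 = (2 + 2*ε + ε^2) / (2*(1+ε)) by field_simp; ring,
    show (2 + 2*ε + ε^2) / (2*(1+ε)) - ε * (1 + ε - 1 / (1 + ε))
      = (2 + 2*ε - 3*ε^2 - 2*ε^3) / (2*(1+ε)) by field_simp; ring,
    div_mul_div_comm, div_le_iff₀ (by positivity)]
  nlinarith [pow_pos hε0 2, pow_pos hε0 3, pow_pos hε0 4, pow_pos hε0 5]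

lemma num_coord (hε0 : 0 < ε) {q : ℝ} (hq : 1/2 + ε ≤ q) (hq1 : q ≤ 1) :
    (1+ε)⁻¹ * q + (1+ε) * (1 - q)
      ≤ ((1+ε) + (1+ε)⁻¹)/2 - ε * ((1+ε) - (1+ε)⁻¹) := by
  have hr : (0:ℝ) < 1 + ε := by linarith
  have h := mul_inv_cancel₀ hr.ne'
  have hi : (0:ℝ) < (1+ε)⁻¹ := by positivity
  have hv : (0:ℝ) ≤ (1+ε) - (1+ε)⁻¹ := by nlinarith
  nlinarith [mul_nonneg (by linarith : (0:ℝ) ≤ q - (1/2+ε)) hv]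

lemma shiftQ_cyl (P : Measure (ℤ → Bool)) (p : ℤ → Bool → ℝ)
    (hcyl : ∀ (s : Finset ℤ) (y : ℤ → Bool),
      P {x | ∀ i ∈ s, x i = y i} = ∏ i ∈ s, ENNReal.ofReal (p i (y i)))
    (k : ℕ) (s : Finset ℤ) (y : ℤ → Bool) :
    (P.map (shift (-(k:ℤ)))) {x | ∀ i ∈ s, x i = y i}
      = ∏ i ∈ s, ENNReal.ofReal (p (i - k) (y i)) := by
  rw [Measure.map_apply (shift_measurable _) (cylMeasurable s y)]
  have hset : shift (-(k:ℤ)) ⁻¹' {x | ∀ i ∈ s, x i = y i}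
      = {x | ∀ j ∈ s.image (fun i => i - (k:ℤ)), x j = y (j + k)} := by
    ext x
    simp only [Set.mem_preimage, Set.mem_setOf_eq, shift]
    constructor
    · intro h j hj
      obtain ⟨i, hi, rfl⟩ := Finset.mem_image.mp hj
      have h2 := h i hi
      rw [show i - (k:ℤ) + (k:ℤ) = i by ring]
      rw [show i + -(k:ℤ) = i - (k:ℤ) by ring] at h2
      exact h2
    · intro h i hi
      have h2 := h (i - k) (Finset.mem_image_of_mem _ hi)
      rw [show i - (k:ℤ) + (k:ℤ) = i by ring] at h2
      rw [show i + -(k:ℤ) = i - (k:ℤ) by ring]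
      exact h2
  rw [hset, hcyl (s.image (fun i => i - (k:ℤ))) (fun j => y (j + k)),
    Finset.prod_image (fun a _ b _ h => by omega)]
  refine Finset.prod_congr rfl fun i _ => ?_
  rw [show i - (k:ℤ) + (k:ℤ) = i by ring]

end Aux6

set_option maxHeartbeats 2000000 in
/-- If the half-stationary nonsingular shift is conservative and has no
absolutely continuous invariant probability, then `0` is a limit point of
`a_n = 1 − 2 P_n(0)`: there is a strictly increasing sequence `n_k → ∞` (of indices `≥ 1`)
with `P_{n_k}(0) → 1/2`. -/
theorem exists_subseq_tendsto_half (P : Measure (ℤ → Bool)) (p : ℤ → Bool → ℝ)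
    (hP : IsProductMeasure P p) (hhs : HalfStationary p) (hns : Nonsingular P)
    (hc : Conservative P) (hno : ¬ HasACIP P) :
    ∃ nk : ℕ → ℕ, StrictMono nk ∧ (∀ k, 1 ≤ nk k) ∧
      Tendsto (fun k => p (nk k : ℤ) false) atTop (nhds (1 / 2)) := by
  classical
  by_contra hcon
  obtain ⟨ε, hε0, hεh, N, hN1, hbig⟩ := subseq_of_limit_point p hcon
  obtain ⟨hPprob, hp0, hpsum, hcyl⟩ := hP
  haveI := hPprob
  have h1e : (0:ℝ) ≤ 1+ε := by linarith
  have h1epos : (0:ℝ) < 1+ε := by linarith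
  have h1ei : (0:ℝ) ≤ (1+ε)⁻¹ := inv_nonneg.2 h1e
  -- basic facts about the marginals
  have hple1 : ∀ (k : ℤ) (bb : Bool), p k bb ≤ 1 := by
    intro k bb
    have h := hpsum k
    cases bb
    · nlinarith [hp0 k true]
    · nlinarith [hp0 k false]
  have hhalf : ∀ k : ℤ, k ≤ 0 → p k false = 1/2 ∧ p k true = 1/2 := by
    intro k hk
    have h1 := hhs k hk
    have h2 := hpsum k
    exact ⟨h1, by linarith⟩
  -- choose the likely symbol in each coordinate
  set b : ℤ → Bool := fun i => if 1/2 ≤ p i false then false else true with hbdef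
  have hqbig : ∀ i : ℤ, (N:ℤ) ≤ i → 1/2 + ε ≤ p i (b i) := by
    intro i hi
    have hi0 : 0 ≤ i := by
      have : (1:ℤ) ≤ (N:ℤ) := by exact_mod_cast hN1
      omega
    have hNi : ((i.toNat : ℕ) : ℤ) = i := Int.toNat_of_nonneg hi0
    have hb := hbig i.toNat (by omega)
    rw [hNi] at hb
    by_cases hcase : 1/2 ≤ p i false
    · rw [abs_of_nonneg (by linarith)] at hb
      simp only [hbdef, if_pos hcase]
      linarith
    · push_neg at hcase
      rw [abs_of_nonpos (by linarith)] at hb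
      have := hpsum i
      simp only [hbdef, if_neg (not_le.mpr hcase)]
      linarith
  -- numeric quantities
  have hupos : (0:ℝ) < ((1+ε) + (1+ε)⁻¹)/2 := by positivity
  have hu1 := num_u_one hε0
  have hw0pos := num_w0_pos hε0 hεh
  have hF := num_F hε0 hεh
  set u : ℝ := ((1+ε) + (1+ε)⁻¹)/2 with hu_def
  set w0 : ℝ := u - ε * ((1+ε) - (1+ε)⁻¹) with hw0_def
  have hρ2pos : (0:ℝ) < 1 - ε^2/2 := by nlinarith
  set ρ : ℝ := Real.sqrt (1 - ε^2/2) with hρdef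
  have hρpos : 0 < ρ := Real.sqrt_pos.2 hρ2pos
  have hρρ : ρ * ρ = 1 - ε^2/2 := Real.mul_self_sqrt hρ2pos.le
  have hρlt1 : ρ < 1 := by nlinarith
  set c : ℝ := u / ρ with hcdef
  have hcpos : 0 < c := div_pos hupos hρpos
  have hcu : c⁻¹ * u = ρ := by
    rw [hcdef, inv_div, div_mul_cancel₀ _ hupos.ne']
  have hcw : c * w0 ≤ ρ := by
    rw [hcdef, div_mul_eq_mul_div, div_le_iff₀ hρpos]
    calc u * w0 ≤ 1 - ε^2/2 := hF
      _ = ρ * ρ := hρρ.symm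
  set β : ℝ := Real.sqrt ρ with hβdef
  have hβpos : 0 < β := Real.sqrt_pos.2 hρpos
  have hββ : β * β = ρ := Real.mul_self_sqrt hρpos.le
  have hβlt1 : β < 1 := by nlinarith
  -- ENNReal versions
  set cE : ℝ≥0∞ := ENNReal.ofReal c with hcEdef
  have hcE0 : cE ≠ 0 := (ENNReal.ofReal_pos.2 hcpos).ne'
  have hcEtop : cE ≠ ⊤ := ENNReal.ofReal_ne_top
  -- weights
  set W : ℤ → Bool → ℝ≥0∞ :=
    fun i bb => ENNReal.ofReal (if bb = b i then (1+ε) else (1+ε)⁻¹) with hWdef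
  set W' : ℤ → Bool → ℝ≥0∞ :=
    fun i bb => ENNReal.ofReal (if bb = b i then (1+ε)⁻¹ else (1+ε)) with hW'def
  -- shifted measures
  set Q : ℕ → Measure (ℤ → Bool) := fun k => P.map (shift (-(k:ℤ))) with hQdef
  have hQprob : ∀ k, IsProbabilityMeasure (Q k) := fun k =>
    Measure.isProbabilityMeasure_map (shift_measurable _).aemeasurable
  have hQcyl : ∀ (k : ℕ) (s : Finset ℤ) (y : ℤ → Bool),
      Q k {x | ∀ i ∈ s, x i = y i} = ∏ i ∈ s, ENNReal.ofReal (p (i - k) (y i)) :=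
    fun k => shiftQ_cyl P p hcyl k
  -- the main Hellinger-type estimate
  have hmain : ∀ k : ℕ, N ≤ k →
      ∫⁻ x, ((Q k).rnDeriv P x) ^ (2⁻¹:ℝ) ∂P ≤ 2 * (ENNReal.ofReal β) ^ (k + 1 - N) := by
    intro k hk
    haveI := hQprob k
    set sk := Finset.Icc (N:ℤ) (k:ℤ) with hskdef
    have hcard : sk.card = k + 1 - N := by
      rw [hskdef, Int.card_Icc]
      omega
    set G := fun x : ℤ → Bool => ∏ i ∈ sk, W i (x i) with hGdef
    set G' := fun x : ℤ → Bool => ∏ i ∈ sk, W' i (x i) with hG'def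
    have hGmeas : Measurable G :=
      Finset.measurable_prod _ fun i _ =>
        (measurable_from_top : Measurable (W i)).comp (measurable_pi_apply i)
    have hG'meas : Measurable G' :=
      Finset.measurable_prod _ fun i _ =>
        (measurable_from_top : Measurable (W' i)).comp (measurable_pi_apply i)
    set A := {x : ℤ → Bool | cE ^ (k+1-N) ≤ G x} with hAdef
    have hA : MeasurableSet A := measurableSet_le measurable_const hGmeas
    have hIGQ : ∫⁻ x, G x ∂(Q k) = (ENNReal.ofReal u) ^ (k+1-N) := by
      rw [hGdef, lintegral_prod_coords (Q k) (fun i => p (i - k)) (hQcyl k) sk W,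
        ← hcard, ← Finset.prod_const]
      refine Finset.prod_congr rfl fun i hi => ?_
      have hik : i - k ≤ 0 := by
        have := (Finset.mem_Icc.mp hi).2
        omega
      obtain ⟨hf, ht⟩ := hhalf (i - k) hik
      rw [hf, ht]
      cases hbi : b i
      · have e1 : W i false = ENNReal.ofReal (1+ε) := by simp [hWdef, hbi]
        have e2 : W i true = ENNReal.ofReal (1+ε)⁻¹ := by simp [hWdef, hbi]
        rw [e1, e2, ← ENNReal.ofReal_mul h1e, ← ENNReal.ofReal_mul h1ei,
          ← ENNReal.ofReal_add (mul_nonneg h1e (by norm_num)) (mul_nonneg h1ei (by norm_num))]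
        congr 1
        rw [hu_def]
        ring
      · have e1 : W i false = ENNReal.ofReal (1+ε)⁻¹ := by simp [hWdef, hbi]
        have e2 : W i true = ENNReal.ofReal (1+ε) := by simp [hWdef, hbi]
        rw [e1, e2, ← ENNReal.ofReal_mul h1ei, ← ENNReal.ofReal_mul h1e,
          ← ENNReal.ofReal_add (mul_nonneg h1ei (by norm_num)) (mul_nonneg h1e (by norm_num))]
        congr 1
        rw [hu_def]
        ring
    have hQA : Q k A ≤ (ENNReal.ofReal ρ) ^ (k+1-N) := by
      refine (markov_aux (Q k) hGmeas.aemeasurable (ε := cE ^ (k+1-N))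
        (pow_ne_zero _ hcE0) (ENNReal.pow_ne_top hcEtop)).trans ?_
      rw [hIGQ, ENNReal.inv_pow, ← mul_pow]
      refine pow_le_pow_left' ?_ _
      rw [show cE⁻¹ = ENNReal.ofReal c⁻¹ from (ENNReal.ofReal_inv_of_pos hcpos).symm,
        ← ENNReal.ofReal_mul (by positivity)]
      exact ENNReal.ofReal_le_ofReal (le_of_eq hcu)
    have hIG'P : ∫⁻ x, G' x ∂P ≤ (ENNReal.ofReal w0) ^ (k+1-N) := by
      rw [hG'def, lintegral_prod_coords P p hcyl sk W', ← hcard, ← Finset.prod_const]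
      refine Finset.prod_le_prod' fun i hi => ?_
      have hiN : (N:ℤ) ≤ i := (Finset.mem_Icc.mp hi).1
      have hq := hqbig i hiN
      have hsum := hpsum i
      cases hbi : b i
      · rw [hbi] at hq
        have e1 : W' i false = ENNReal.ofReal (1+ε)⁻¹ := by simp [hW'def, hbi]
        have e2 : W' i true = ENNReal.ofReal (1+ε) := by simp [hW'def, hbi]
        rw [e1, e2, ← ENNReal.ofReal_mul h1ei, ← ENNReal.ofReal_mul h1e,
          ← ENNReal.ofReal_add (mul_nonneg h1ei (hp0 i false)) (mul_nonneg h1e (hp0 i true))]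
        refine ENNReal.ofReal_le_ofReal ?_
        have h := num_coord hε0 hq (hple1 i false)
        rw [← hu_def, ← hw0_def] at h
        have hpt : p i true = 1 - p i false := by linarith
        rw [hpt]
        linarith
      · rw [hbi] at hq
        have e1 : W' i false = ENNReal.ofReal (1+ε) := by simp [hW'def, hbi]
        have e2 : W' i true = ENNReal.ofReal (1+ε)⁻¹ := by simp [hW'def, hbi]
        rw [e1, e2, ← ENNReal.ofReal_mul h1e, ← ENNReal.ofReal_mul h1ei,
          ← ENNReal.ofReal_add (mul_nonneg h1e (hp0 i false)) (mul_nonneg h1ei (hp0 i true))]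
        refine ENNReal.ofReal_le_ofReal ?_
        have h := num_coord hε0 hq (hple1 i true)
        rw [← hu_def, ← hw0_def] at h
        have hpf : p i false = 1 - p i true := by linarith
        rw [hpf]
        linarith
    have hcompl : Aᶜ ⊆ {x | (cE ^ (k+1-N))⁻¹ ≤ G' x} := by
      intro x hx
      simp only [hAdef, Set.mem_compl_iff, Set.mem_setOf_eq, not_le] at hx
      have hGG' : G x * G' x = 1 := by
        rw [hGdef, hG'def, ← Finset.prod_mul_distrib]
        refine Finset.prod_eq_one fun i _ => ?_
        by_cases hxi : x i = b i
        · simp only [hWdef, hW'def, if_pos hxi]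
          rw [← ENNReal.ofReal_mul h1e, mul_inv_cancel₀ (ne_of_gt h1epos),
            ENNReal.ofReal_one]
        · simp only [hWdef, hW'def, if_neg hxi]
          rw [← ENNReal.ofReal_mul h1ei, inv_mul_cancel₀ (ne_of_gt h1epos),
            ENNReal.ofReal_one]
      show (cE ^ (k+1-N))⁻¹ ≤ G' x
      calc (cE ^ (k+1-N))⁻¹ = (cE ^ (k+1-N))⁻¹ * (G x * G' x) := by rw [hGG', mul_one]
        _ ≤ (cE ^ (k+1-N))⁻¹ * (cE ^ (k+1-N) * G' x) := by gcongr
        _ = ((cE ^ (k+1-N))⁻¹ * cE ^ (k+1-N)) * G' x := by rw [mul_assoc]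
        _ = G' x := by
            rw [ENNReal.inv_mul_cancel (pow_ne_zero _ hcE0) (ENNReal.pow_ne_top hcEtop),
              one_mul]
    have hPAc : P Aᶜ ≤ (ENNReal.ofReal ρ) ^ (k+1-N) := by
      refine (measure_mono hcompl).trans ?_
      refine (markov_aux P hG'meas.aemeasurable
        (ENNReal.inv_ne_zero.2 (ENNReal.pow_ne_top hcEtop))
        (ENNReal.inv_ne_top.2 (pow_ne_zero _ hcE0))).trans ?_
      rw [inv_inv]
      calc cE ^ (k+1-N) * ∫⁻ x, G' x ∂P
          ≤ cE ^ (k+1-N) * (ENNReal.ofReal w0) ^ (k+1-N) := by gcongr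
        _ = (cE * ENNReal.ofReal w0) ^ (k+1-N) := (mul_pow _ _ _).symm
        _ ≤ (ENNReal.ofReal ρ) ^ (k+1-N) := by
            refine pow_le_pow_left' ?_ _
            rw [hcEdef, ← ENNReal.ofReal_mul hcpos.le]
            exact ENNReal.ofReal_le_ofReal hcw
    have hhalfpow : ∀ z : ℝ≥0∞, z ≤ (ENNReal.ofReal ρ)^(k+1-N) →
        z ^ (2⁻¹:ℝ) ≤ (ENNReal.ofReal β)^(k+1-N) := by
      intro z hz
      refine (ENNReal.rpow_le_rpow hz (by norm_num)).trans_eq ?_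
      have hβE : ENNReal.ofReal ρ = (ENNReal.ofReal β) ^ 2 := by
        rw [sq, ← ENNReal.ofReal_mul hβpos.le, hββ]
      rw [hβE, ← pow_mul, ← ENNReal.rpow_natCast (ENNReal.ofReal β) (2 * (k+1-N)),
        ← ENNReal.rpow_mul,
        show ((2 * (k+1-N) : ℕ) : ℝ) * 2⁻¹ = ((k+1-N : ℕ) : ℝ) by push_cast; ring,
        ENNReal.rpow_natCast]
    refine (lintegral_sqrt_rnDeriv_le (Q k) P A hA).trans ?_
    calc (Q k A) ^ (2⁻¹:ℝ) + (P Aᶜ) ^ (2⁻¹:ℝ)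
        ≤ (ENNReal.ofReal β)^(k+1-N) + (ENNReal.ofReal β)^(k+1-N) :=
          add_le_add (hhalfpow _ hQA) (hhalfpow _ hPAc)
      _ = 2 * (ENNReal.ofReal β)^(k+1-N) := (two_mul _).symm
  -- the trivial bound
  have htriv : ∀ k : ℕ, ∫⁻ x, ((Q k).rnDeriv P x) ^ (2⁻¹:ℝ) ∂P ≤ 1 := by
    intro k
    haveI := hQprob k
    refine (lintegral_sqrt_rnDeriv_le (Q k) P Set.univ MeasurableSet.univ).trans ?_
    rw [Set.compl_univ, measure_univ, measure_empty, ENNReal.one_rpow,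
      ENNReal.zero_rpow_of_pos (by norm_num), add_zero]
  -- summability of the bounds
  have hnn : ∀ n : ℕ, (0:ℝ) ≤ (if n+1 < N then (1:ℝ) else 0) + (2/β^N) * β^n := by
    intro n
    have h1 : (0:ℝ) ≤ (if n+1 < N then (1:ℝ) else 0) := by split <;> norm_num
    have h2 : (0:ℝ) ≤ (2/β^N) * β^n := by positivity
    linarith
  have hsummable : Summable (fun n : ℕ => (if n+1 < N then (1:ℝ) else 0) + (2/β^N) * β^n) := by
    refine Summable.add ?_ (Summable.mul_left _ (summable_geometric_of_lt_one hβpos.le hβlt1))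
    refine summable_of_ne_finset_zero (s := Finset.range N) fun n hn => ?_
    rw [Finset.mem_range, not_lt] at hn
    rw [if_neg (by omega)]
  have hbound : ∀ n : ℕ, ∫⁻ x, ((Q (n+1)).rnDeriv P x) ^ (2⁻¹:ℝ) ∂P
      ≤ ENNReal.ofReal ((if n+1 < N then (1:ℝ) else 0) + (2/β^N) * β^n) := by
    intro n
    by_cases hn : n + 1 < N
    · rw [if_pos hn]
      refine (htriv (n+1)).trans ?_
      rw [ENNReal.one_le_ofReal]
      have : (0:ℝ) ≤ (2/β^N) * β^n := by positivity
      linarith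
    · rw [if_neg hn]
      have hk : N ≤ n+1 := by omega
      refine (hmain (n+1) hk).trans ?_
      rw [zero_add]
      have hreal : 2 * β^(n+1+1-N) ≤ (2/β^N)*β^n := by
        rw [div_mul_eq_mul_div, le_div_iff₀ (by positivity)]
        calc 2 * β^(n+1+1-N) * β^N = 2 * β^(n+1+1-N+N) := by rw [pow_add]; ring
          _ ≤ 2 * β^n := by
              have hexp : n ≤ n+1+1-N+N := by omega
              have := pow_le_pow_of_le_one hβpos.le hβlt1.le hexp
              linarith
      calc 2 * (ENNReal.ofReal β)^(n+1+1-N) = ENNReal.ofReal (2 * β^(n+1+1-N)) := by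
            rw [ENNReal.ofReal_mul (by norm_num), ← ENNReal.ofReal_pow hβpos.le,
              ENNReal.ofReal_ofNat]
        _ ≤ _ := ENNReal.ofReal_le_ofReal hreal
  have hS : ∑' n : ℕ, ∫⁻ x, rnd P (n+1) x ^ (2⁻¹:ℝ) ∂P ≠ ⊤ := by
    have heq : ∀ n : ℕ, rnd P (n+1) = (Q (n+1)).rnDeriv P := fun n => rfl
    refine ne_top_of_le_ne_top (b := ENNReal.ofReal
      (∑' n : ℕ, ((if n+1 < N then (1:ℝ) else 0) + (2/β^N) * β^n))) ENNReal.ofReal_ne_top ?_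
    calc ∑' n : ℕ, ∫⁻ x, rnd P (n+1) x ^ (2⁻¹:ℝ) ∂P
        ≤ ∑' n : ℕ, ENNReal.ofReal ((if n+1 < N then (1:ℝ) else 0) + (2/β^N) * β^n) := by
          refine ENNReal.tsum_le_tsum fun n => ?_
          rw [heq n]
          exact hbound n
      _ = ENNReal.ofReal (∑' n : ℕ, ((if n+1 < N then (1:ℝ) else 0) + (2/β^N) * β^n)) :=
          (ENNReal.ofReal_tsum_of_nonneg hnn hsummable).symm
  -- endgame: conservativity is contradicted
  have hmeas2 : ∀ n : ℕ, Measurable fun x => rnd P (n+1) x ^ (2⁻¹:ℝ) := fun n =>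
    (Measure.measurable_rnDeriv _ _).pow_const _
  have h1 : ∫⁻ x, ∑' n : ℕ, rnd P (n+1) x ^ (2⁻¹:ℝ) ∂P ≠ ⊤ := by
    rw [lintegral_tsum fun n => (hmeas2 n).aemeasurable]
    exact hS
  have h2 : ∀ᵐ x ∂P, ∑' n : ℕ, rnd P (n+1) x ^ (2⁻¹:ℝ) < ⊤ :=
    ae_lt_top (Measurable.ennreal_tsum hmeas2) h1
  have h3 : ∀ᵐ x ∂P, ∀ n : ℕ, rnd P (n+1) x < ⊤ := ae_all_iff.2 fun n => by
    haveI := hQprob (n+1)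
    exact Measure.rnDeriv_lt_top _ _
  have hfalse : ∀ᵐ x ∂P, False := by
    filter_upwards [hc, h2, h3] with x hx1 hx2 hx3
    have hterm : Tendsto (fun n : ℕ => rnd P (n+1) x ^ (2⁻¹:ℝ)) atTop (nhds 0) :=
      ENNReal.tendsto_atTop_zero_of_tsum_ne_top hx2.ne
    obtain ⟨M, hM⟩ := eventually_atTop.1 (hterm.eventually_lt_const (by norm_num : (0:ℝ≥0∞) < 1))
    have hle1 : ∀ n, M ≤ n → rnd P (n+1) x ≤ 1 := by
      intro n hn
      by_contra hgt
      push_neg at hgt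
      have hge : (1:ℝ≥0∞) ≤ rnd P (n+1) x ^ (2⁻¹:ℝ) := by
        calc (1:ℝ≥0∞) = 1 ^ (2⁻¹:ℝ) := (ENNReal.one_rpow _).symm
          _ ≤ rnd P (n+1) x ^ (2⁻¹:ℝ) := ENNReal.rpow_le_rpow hgt.le (by norm_num)
      exact absurd (hM n hn) (not_lt.2 hge)
    have hcomp : ∀ n : ℕ, rnd P (n+1) x
        ≤ (if n < M then rnd P (n+1) x else 0) + rnd P (n+1) x ^ (2⁻¹:ℝ) := by
      intro n
      by_cases hn : n < M
      · rw [if_pos hn]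
        exact le_self_add
      · rw [if_neg hn, zero_add]
        have h4 := hle1 n (by omega)
        calc rnd P (n+1) x = rnd P (n+1) x ^ (1:ℝ) := (ENNReal.rpow_one _).symm
          _ ≤ rnd P (n+1) x ^ (2⁻¹:ℝ) :=
            ENNReal.rpow_le_rpow_of_exponent_ge h4 (by norm_num)
    have hlt : ∑' n : ℕ, rnd P (n+1) x < ⊤ := by
      refine lt_of_le_of_lt (ENNReal.tsum_le_tsum hcomp) ?_
      rw [ENNReal.tsum_add]
      refine ENNReal.add_lt_top.2 ⟨?_, hx2⟩
      rw [tsum_eq_sum (s := Finset.range M)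
        (fun n hn => by rw [if_neg (by simpa using hn)])]
      exact ENNReal.sum_lt_top.2 fun n _ => by
        split
        · exact hx3 n
        · exact ENNReal.zero_lt_top
    rw [hx1] at hlt
    exact absurd hlt (lt_irrefl _)
  have hzero : P Set.univ = 0 := by
    have := hfalse
    rw [ae_iff] at this
    simpa using this
  rw [measure_univ] at hzero
  exact one_ne_zero hzero



end NSB
end
end
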